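/- arXiv:1702.06666 — 5 statements merged into one kernel-verified Lean document; each statement's English description precedes it below -/
import Mathlib

section
/- The binomial-Eulerian polynomial Ã_n(t) := 1 + t · Σ_{m=1}^{n} C(n,m) A_m(t) is palindromic of degree n, i.e., its coefficient of t^j equals its coefficient of t^{n-j} for all 0 ≤ j ≤ n. -/
open Finset Polynomial

open scoped Classical

noncomputable section

/-- The value of `σ` at 0-based position `i`, as a natural number (0-based values). -/
def pv (n : ℕ) (σ : Equiv.Perm (Fin n)) (i : ℕ) : ℕ :=
  if h : i < n then (σ ⟨i, h⟩ : ℕ) else 0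

/-- Descent set of `σ` in 0-based positions: `i` with `σ(i) > σ(i+1)`. -/
def desSet (n : ℕ) (σ : Equiv.Perm (Fin n)) : Finset ℕ :=
  (Finset.range (n - 1)).filter fun i => pv n σ (i + 1) < pv n σ i

def desNum (n : ℕ) (σ : Equiv.Perm (Fin n)) : ℕ := (desSet n σ).card

/-- Major index: the sum of the (1-based) descent positions. -/
def majNum (n : ℕ) (σ : Equiv.Perm (Fin n)) : ℕ := ∑ i ∈ desSet n σ, (i + 1)

/-- Excedance number. -/
def excNum (n : ℕ) (σ : Equiv.Perm (Fin n)) : ℕ :=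
  ((Finset.range n).filter fun i => i < pv n σ i).card

/-- Inversion number. -/
def invNum (n : ℕ) (σ : Equiv.Perm (Fin n)) : ℕ :=
  (((Finset.range n) ×ˢ (Finset.range n)).filter fun p =>
    p.1 < p.2 ∧ pv n σ p.2 < pv n σ p.1).card

/-- `σ` has a double descent: `σ(i) > σ(i+1) > σ(i+2)` for some valid `i`. -/
def HasDoubleDescent (n : ℕ) (σ : Equiv.Perm (Fin n)) : Prop :=
  ∃ i, i + 2 < n ∧ pv n σ (i + 2) < pv n σ (i + 1) ∧ pv n σ (i + 1) < pv n σ i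

/-- `σ` has a final descent: `σ(n-1) > σ(n)` (1-based). -/
def HasFinalDescent (n : ℕ) (σ : Equiv.Perm (Fin n)) : Prop :=
  2 ≤ n ∧ pv n σ (n - 1) < pv n σ (n - 2)

/-- `σ` has an initial descent: `σ(1) > σ(2)` (1-based). -/
def HasInitialDescent (n : ℕ) (σ : Equiv.Perm (Fin n)) : Prop :=
  2 ≤ n ∧ pv n σ 1 < pv n σ 0

/-- The Eulerian polynomial `A_n(t) = ∑_{σ ∈ S_n} t^{des σ}`. -/
def eulerPoly (n : ℕ) : Polynomial ℤ :=
  ∑ σ : Equiv.Perm (Fin n), X ^ desNum n σ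

/-- The binomial-Eulerian polynomial `Ã_n(t) = 1 + t ∑_{m=1}^n C(n,m) A_m(t)`. -/
def binEulerPoly (n : ℕ) : Polynomial ℤ :=
  1 + X * ∑ m ∈ Finset.Icc 1 n, (n.choose m : Polynomial ℤ) * eulerPoly m

/-
Inserting the largest letter into each of the `n + 1` slots of `σ ∈ S_n` creates a new descent
unless the slot lies inside a descent or at the end, whence
`A_{n+1} = (1 + n t) A_n + t (1 - t) A_n'`. The same recurrence then holds for the binomial
transform `F_k = ∑_m C(k,m) (t - 1)^(k-m) A_m`, and since `F_1 = t A_1` this gives `F_k = t A_k`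
for `k ≥ 1`. Expanding `t^(n-m) = ((t - 1) + 1)^(n-m)` turns `Ã_n = ∑_k C(n,k) F_k` into
`∑_m C(n,m) t^(n-m) A_m`. Reversal of permutations sends `des` to `m - 1 - des`, so `t^(n-m) A_m`
reflected in degree `n` is `t A_m` (and `1` for `m = 0`): reflecting that sum term by term gives
back `Ã_n`.
-/

section BinomialTransform

variable {R : Type*} [CommSemiring R]

def binomialTransform (c : R) (a : ℕ → R) (n : ℕ) : R :=
  ∑ m ∈ range (n + 1), (n.choose m : R) * c ^ (n - m) * a m

@[simp]
theorem binomialTransform_zero (c : R) (a : ℕ → R) : binomialTransform c a 0 = a 0 := by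
  simp [binomialTransform]

theorem binomialTransform_succ (c : R) (a : ℕ → R) (n : ℕ) :
    binomialTransform c a (n + 1) =
      c * binomialTransform c a n + binomialTransform c (fun m => a (m + 1)) n := by
  simp only [binomialTransform, mul_sum, mul_assoc]
  rw [sum_choose_succ_mul (fun i j => c ^ j * a i) n]
  congr 1
  refine sum_congr rfl fun i hi => ?_
  rw [Nat.sub_add_comm (Nat.lt_succ_iff.mp (mem_range.mp hi)), pow_succ]
  ring

theorem binomialTransform_mul_add (c d : R) (a b : ℕ → R) (n : ℕ) :
    binomialTransform c (fun m => d * a m + b m) n =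
      d * binomialTransform c a n + binomialTransform c b n := by
  simp only [binomialTransform, mul_add, sum_add_distrib, mul_sum]
  congr 1
  exact sum_congr rfl fun _ _ => by ring

theorem binomialTransform_binomialTransform (c d : R) (a : ℕ → R) (n : ℕ) :
    binomialTransform c (binomialTransform d a) n = binomialTransform (c + d) a n := by
  induction n generalizing a with
  | zero => simp
  | succ n ih =>
    have hshift : (fun m => binomialTransform d a (m + 1)) =
        fun m => d * binomialTransform d a m + binomialTransform d (fun m => a (m + 1)) m :=
      funext (binomialTransform_succ d a)
    rw [binomialTransform_succ, hshift, binomialTransform_mul_add, ih, ih,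
      binomialTransform_succ]
    ring

end BinomialTransform

section DerivativeRecurrence

variable {R : Type*} [CommRing R]

theorem one_sub_X_mul_derivative_X_sub_one_pow (j : ℕ) :
    (1 - X) * derivative ((X - 1 : R[X]) ^ j) = -((j : R[X]) * (X - 1) ^ j) := by
  cases j with
  | zero => simp
  | succ j =>
    simp only [derivative_pow, derivative_sub, derivative_X, derivative_one, C_eq_natCast]
    push_cast
    ring

theorem binomialTransform_X_sub_one_succ (a : ℕ → R[X])
    (ha : ∀ m, a (m + 1) = (1 + (m : R[X]) * X) * a m + X * (1 - X) * derivative (a m))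
    (k : ℕ) :
    binomialTransform (X - 1) a (k + 1) =
      ((k : R[X]) + 1) * X * binomialTransform (X - 1) a k +
        X * (1 - X) * derivative (binomialTransform (X - 1) a k) := by
  rw [binomialTransform_succ]
  simp only [binomialTransform, ha, derivative_sum, mul_sum, ← sum_add_distrib]
  refine sum_congr rfl fun m hm => ?_
  have hkm : ((k - m : ℕ) : R[X]) = k - m := Nat.cast_sub (Nat.lt_succ_iff.mp (mem_range.mp hm))
  have hpow := one_sub_X_mul_derivative_X_sub_one_pow (R := R) (k - m)
  simp only [derivative_mul, derivative_natCast, zero_mul, zero_add]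
  linear_combination -(X * (k.choose m : R[X]) * a m) * hpow
    + (X * (k.choose m : R[X]) * (X - 1) ^ (k - m) * a m) * hkm

end DerivativeRecurrence

section Reflect

variable {R : Type*} [CommSemiring R]

theorem reflect_sum {ι : Type*} (N : ℕ) (s : Finset ι) (f : ι → R[X]) :
    reflect N (∑ i ∈ s, f i) = ∑ i ∈ s, reflect N (f i) :=
  map_sum (⟨⟨reflect N, reflect_zero⟩, fun f g => reflect_add f g N⟩ : R[X] →+ R[X]) f s

theorem reflect_binomialTransform_X (a : ℕ → R[X]) (ha : ∀ m, (a m).natDegree ≤ m)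
    (n : ℕ) :
    reflect n (binomialTransform X a n) = binomialTransform 1 (fun m => reflect m (a m)) n := by
  simp only [binomialTransform, one_pow, mul_one, reflect_sum]
  refine sum_congr rfl fun m hm => ?_
  have hmul := reflect_mul _ _ (natDegree_X_pow_le (n - m)) (ha m)
  rw [Nat.sub_add_cancel (Nat.lt_succ_iff.mp (mem_range.mp hm)), reflect_monomial,
    revAt_le le_rfl, Nat.sub_self, pow_zero, one_mul] at hmul
  rw [mul_assoc, ← map_natCast C, reflect_C_mul, hmul]

end Reflect

section Permutations

variable {n : ℕ}

theorem pv_of_lt (σ : Equiv.Perm (Fin n)) {i : ℕ} (h : i < n) : pv n σ i = σ ⟨i, h⟩ :=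
  dif_pos h

theorem pv_lt (σ : Equiv.Perm (Fin n)) {i : ℕ} (h : i < n) : pv n σ i < n := by
  rw [pv_of_lt σ h]
  exact Fin.is_lt _

theorem mem_desSet {σ : Equiv.Perm (Fin n)} {i : ℕ} :
    i ∈ desSet n σ ↔ i + 1 < n ∧ pv n σ (i + 1) < pv n σ i := by
  simp only [desSet, mem_filter, mem_range]
  omega

theorem desSet_subset (σ : Equiv.Perm (Fin n)) : desSet n σ ⊆ range (n - 1) :=
  filter_subset _ _

theorem desNum_le (σ : Equiv.Perm (Fin n)) : desNum n σ ≤ n - 1 :=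
  (card_le_card (desSet_subset σ)).trans (card_range _).le

theorem pv_inj (σ : Equiv.Perm (Fin n)) {i j : ℕ} (hi : i < n) (hj : j < n) :
    pv n σ i = pv n σ j ↔ i = j := by
  rw [pv_of_lt σ hi, pv_of_lt σ hj, Fin.val_inj, σ.injective.eq_iff, Fin.mk.injEq]

theorem notMem_desSet_iff (σ : Equiv.Perm (Fin n)) {i : ℕ} (h : i + 1 < n) :
    i ∉ desSet n σ ↔ pv n σ i < pv n σ (i + 1) := by
  have hne := (pv_inj σ (i := i) (by omega) h).not.mpr (by omega)
  rw [mem_desSet]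
  omega

theorem pv_mul_revPerm (σ : Equiv.Perm (Fin n)) {i : ℕ} (h : i < n) :
    pv n (σ * Fin.revPerm) i = pv n σ (n - 1 - i) := by
  rw [pv_of_lt _ h, pv_of_lt σ (by omega)]
  simp only [Equiv.Perm.mul_apply, Fin.revPerm_apply, Fin.rev]
  congr 3
  omega

theorem mem_desSet_mul_revPerm (σ : Equiv.Perm (Fin n)) {i : ℕ} (h : i + 1 < n) :
    i ∈ desSet n (σ * Fin.revPerm) ↔ n - 2 - i ∉ desSet n σ := by
  rw [mem_desSet, notMem_desSet_iff σ (by omega), pv_mul_revPerm σ h,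
    pv_mul_revPerm σ (by omega), show n - 1 - (i + 1) = n - 2 - i by omega,
    show n - 1 - i = n - 2 - i + 1 by omega]
  exact and_iff_right h

theorem desNum_mul_revPerm (σ : Equiv.Perm (Fin n)) :
    desNum n (σ * Fin.revPerm) = n - 1 - desNum n σ := by
  have hrev : desNum n (σ * Fin.revPerm) = #(range (n - 1) \ desSet n σ) := by
    have hlt : ∀ {τ : Equiv.Perm (Fin n)} {i}, i ∈ desSet n τ → i + 1 < n := fun hi =>
      (mem_desSet.mp hi).1
    refine card_nbij' (fun i => n - 2 - i) (fun i => n - 2 - i) (fun i hi => ?_) (fun j hj => ?_)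
      (fun i hi => ?_) (fun j hj => ?_)
    · dsimp only
      rw [mem_coe, mem_sdiff, mem_range]
      exact ⟨by have := hlt hi; omega, (mem_desSet_mul_revPerm σ (hlt hi)).mp hi⟩
    · rw [mem_coe, mem_sdiff, mem_range] at hj
      dsimp only
      rw [mem_coe, mem_desSet_mul_revPerm σ (by omega), show n - 2 - (n - 2 - j) = j by omega]
      exact hj.2
    · have := hlt hi
      dsimp only
      omega
    · rw [mem_coe, mem_sdiff, mem_range] at hj
      dsimp only
      omega
  rw [hrev, card_sdiff_of_subset (desSet_subset σ), card_range, desNum]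

end Permutations

section InsertMax

variable {n : ℕ}

theorem insertNth_last_injective (σ : Equiv.Perm (Fin n)) (p : Fin (n + 1)) :
    Function.Injective (p.insertNth (Fin.last n) (Fin.castSucc ∘ σ)) := by
  rw [← Fin.cons_comp_cycleRange]
  refine (Fin.cons_injective_iff.mpr ⟨?_, (Fin.castSucc_injective n).comp σ.injective⟩).comp
    p.cycleRange.injective
  rintro ⟨i, hi⟩
  exact (Fin.castSucc_lt_last _).ne hi

def insertMax (σ : Equiv.Perm (Fin n)) (p : Fin (n + 1)) : Equiv.Perm (Fin (n + 1)) :=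
  Equiv.ofBijective _ (Finite.injective_iff_bijective.mp (insertNth_last_injective σ p))

theorem pv_insertMax_of_lt (σ : Equiv.Perm (Fin n)) (p : Fin (n + 1)) {i : ℕ} (h : i < p) :
    pv (n + 1) (insertMax σ p) i = pv n σ i := by
  have hin : i < n := by omega
  rw [pv_of_lt _ (by omega), pv_of_lt σ hin]
  simp only [insertMax, Equiv.ofBijective_apply, Function.comp_apply, eq_rec_constant,
    Fin.insertNth_apply_below (show (⟨i, _⟩ : Fin (n + 1)) < p from h), Fin.val_castSucc]
  rfl

theorem pv_insertMax_self (σ : Equiv.Perm (Fin n)) (p : Fin (n + 1)) :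
    pv (n + 1) (insertMax σ p) p = n := by
  rw [pv_of_lt _ p.is_lt]
  simp [insertMax]

theorem pv_insertMax_of_gt (σ : Equiv.Perm (Fin n)) (p : Fin (n + 1)) {i : ℕ} (h : p < i)
    (hi : i ≤ n) : pv (n + 1) (insertMax σ p) i = pv n σ (i - 1) := by
  rw [pv_of_lt _ (by omega), pv_of_lt σ (by omega)]
  simp only [insertMax, Equiv.ofBijective_apply, Function.comp_apply, eq_rec_constant,
    Fin.insertNth_apply_above (show p < (⟨i, _⟩ : Fin (n + 1)) from h), Fin.val_castSucc]
  rfl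

theorem insertMax_apply_self (σ : Equiv.Perm (Fin n)) (p : Fin (n + 1)) :
    insertMax σ p p = Fin.last n := by
  simp [insertMax]

theorem insertMax_injective :
    Function.Injective fun x : Equiv.Perm (Fin n) × Fin (n + 1) => insertMax x.1 x.2 := by
  rintro ⟨σ, p⟩ ⟨σ', p'⟩ h
  dsimp only at h
  obtain rfl : p = p' :=
    (insertMax σ' p').injective (by rw [← h, insertMax_apply_self, h, insertMax_apply_self])
  have hcomp : Fin.castSucc ∘ σ = Fin.castSucc ∘ σ' :=
    Fin.insertNth_right_injective (α := fun _ => Fin (n + 1)) (p := p) _ (congrArg DFunLike.coe h)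
  rw [Equiv.ext fun j => Fin.castSucc_injective _ (congrFun hcomp j)]

theorem desSet_insertMax (σ : Equiv.Perm (Fin n)) (p : Fin (n + 1)) :
    desSet (n + 1) (insertMax σ p) =
      ((desSet n σ).filter (· + 1 ≠ (p : ℕ))).image
          (fun i => if i + 1 < (p : ℕ) then i else i + 1) ∪
        (range n).filter (· = (p : ℕ)) := by
  have hp := p.is_lt
  ext i
  simp only [mem_union, mem_image, mem_filter, mem_range, mem_desSet]
  constructor
  · rintro ⟨hi, hdes⟩
    rcases lt_trichotomy i p with hip | rfl | hpi
    · rw [pv_insertMax_of_lt σ p hip] at hdes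
      obtain hip' | hip' : i + 1 < p ∨ i + 1 = p := by omega
      · rw [pv_insertMax_of_lt σ p hip'] at hdes
        exact Or.inl ⟨i, ⟨⟨⟨by omega, hdes⟩, hip'.ne⟩, if_pos hip'⟩⟩
      · rw [hip', pv_insertMax_self] at hdes
        exact absurd hdes (pv_lt σ (by omega)).not_gt
    · exact Or.inr ⟨by omega, rfl⟩
    · obtain ⟨j, rfl⟩ : ∃ j, i = j + 1 := ⟨i - 1, by omega⟩
      rw [pv_insertMax_of_gt σ p (by omega) (by omega),
        pv_insertMax_of_gt σ p hpi (by omega)] at hdes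
      exact Or.inl ⟨j, ⟨⟨⟨by omega, hdes⟩, by omega⟩, if_neg (by omega)⟩⟩
  · rintro (⟨j, ⟨⟨hj, hdes⟩, hjp⟩, rfl⟩ | ⟨hi, rfl⟩)
    · split_ifs with h
      · rw [pv_insertMax_of_lt σ p h, pv_insertMax_of_lt σ p (by omega)]
        exact ⟨by omega, hdes⟩
      · rw [pv_insertMax_of_gt σ p (by omega) (by omega),
          pv_insertMax_of_gt σ p (by omega) (by omega)]
        exact ⟨by omega, hdes⟩
    · rw [pv_insertMax_self, pv_insertMax_of_gt σ p (by omega) (by omega)]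
      exact ⟨by omega, pv_lt σ (by omega)⟩

/-- The slots where inserting the maximum creates no new descent: those inside a descent, and the
last one. -/
def descentSlots (σ : Equiv.Perm (Fin n)) : Finset ℕ :=
  insert n ((desSet n σ).image (· + 1))

theorem desNum_insertMax (σ : Equiv.Perm (Fin n)) (p : Fin (n + 1)) :
    desNum (n + 1) (insertMax σ p) =
      if (p : ℕ) ∈ descentSlots σ then desNum n σ else desNum n σ + 1 := by
  have hp := p.is_lt
  have hdisj : Disjoint (((desSet n σ).filter (· + 1 ≠ (p : ℕ))).image
      (fun i => if i + 1 < (p : ℕ) then i else i + 1)) ((range n).filter (· = (p : ℕ))) := by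
    simp only [disjoint_left, mem_image, mem_filter]
    rintro _ ⟨i, ⟨_, hip⟩, rfl⟩ ⟨_, h⟩
    split_ifs at h <;> omega
  have hinj : Set.InjOn (fun i => if i + 1 < (p : ℕ) then i else i + 1)
      ((desSet n σ).filter (· + 1 ≠ (p : ℕ))) := by
    intro i hi j hj h
    simp only [coe_filter, Set.mem_ofPred_eq] at hi hj
    dsimp only at h
    split_ifs at h <;> omega
  rw [desNum, desSet_insertMax, card_union_of_disjoint hdisj, card_image_of_injOn hinj,
    filter_eq' (range n)]
  simp only [descentSlots, mem_insert, mem_image, mem_range]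
  by_cases hq : ∃ q ∈ desSet n σ, q + 1 = p
  · obtain ⟨q, hq, hqp⟩ := hq
    have hqn := (mem_desSet.mp hq).1
    have herase : (desSet n σ).filter (· + 1 ≠ (p : ℕ)) = (desSet n σ).erase q := by
      ext i
      rw [mem_filter, mem_erase]
      constructor
      · exact fun ⟨hi, hip⟩ => ⟨by omega, hi⟩
      · exact fun ⟨hiq, hi⟩ => ⟨hi, by omega⟩
    rw [herase, card_erase_of_mem hq, if_pos (by omega), if_pos (Or.inr ⟨q, hq, hqp⟩),
      card_singleton, desNum, Nat.sub_add_cancel (card_pos.mpr ⟨q, hq⟩)]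
  · have hall : (desSet n σ).filter (· + 1 ≠ (p : ℕ)) = desSet n σ :=
      filter_true_of_mem fun i hi hip => hq ⟨i, hi, hip⟩
    rw [hall, ← desNum]
    by_cases hpn : (p : ℕ) = n
    · rw [if_neg (by omega), if_pos (Or.inl hpn), card_empty, add_zero]
    · rw [if_pos (by omega), if_neg (not_or.mpr ⟨hpn, hq⟩), card_singleton]

theorem descentSlots_subset (σ : Equiv.Perm (Fin n)) : descentSlots σ ⊆ range (n + 1) := by
  refine insert_subset (mem_range.mpr n.lt_succ_self) fun i hi => ?_
  obtain ⟨j, hj, rfl⟩ := mem_image.mp hi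
  exact mem_range.mpr (by have := (mem_desSet.mp hj).1; omega)

theorem card_descentSlots (σ : Equiv.Perm (Fin n)) : #(descentSlots σ) = desNum n σ + 1 := by
  rw [descentSlots, card_insert_of_notMem, card_image_of_injective _ (add_left_injective 1), desNum]
  rintro hn
  obtain ⟨j, hj, hjn⟩ := mem_image.mp hn
  have := (mem_desSet.mp hj).1
  omega

theorem sum_X_pow_desNum_insertMax (σ : Equiv.Perm (Fin n)) :
    ∑ p : Fin (n + 1), (X : ℤ[X]) ^ desNum (n + 1) (insertMax σ p) =
      ((desNum n σ + 1 : ℕ) : ℤ[X]) * X ^ desNum n σ +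
        ((n - desNum n σ : ℕ) : ℤ[X]) * X ^ (desNum n σ + 1) := by
  simp only [desNum_insertMax]
  set S := descentSlots σ
  set d := desNum n σ
  have hout : ∑ i ∈ range (n + 1) \ S, (X : ℤ[X]) ^ (if i ∈ S then d else d + 1) =
      ∑ i ∈ range (n + 1) \ S, X ^ (d + 1) :=
    sum_congr rfl fun i hi => by rw [if_neg (mem_sdiff.mp hi).2]
  have hin : ∑ i ∈ S, (X : ℤ[X]) ^ (if i ∈ S then d else d + 1) = ∑ i ∈ S, X ^ d :=
    sum_congr rfl fun i hi => by rw [if_pos hi]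
  rw [Fin.sum_univ_eq_sum_range (fun i => X ^ if i ∈ S then d else d + 1),
    ← sum_sdiff (descentSlots_subset σ), hout, hin, sum_const, sum_const, nsmul_eq_mul,
    nsmul_eq_mul, card_sdiff_of_subset (descentSlots_subset σ), card_range, card_descentSlots,
    add_comm, Nat.add_sub_add_right]

end InsertMax

theorem eulerPoly_zero : eulerPoly 0 = 1 := by
  simp [eulerPoly, desNum, desSet]

theorem natDegree_eulerPoly_le (m : ℕ) : (eulerPoly m).natDegree ≤ m :=
  natDegree_sum_le_of_forall_le _ _ fun σ _ =>
    (natDegree_X_pow_le _).trans ((desNum_le σ).trans (Nat.sub_le _ _))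

theorem eulerPoly_succ (n : ℕ) :
    eulerPoly (n + 1) =
      (1 + (n : ℤ[X]) * X) * eulerPoly n + X * (1 - X) * derivative (eulerPoly n) := by
  have hbij :
      Function.Bijective fun x : Equiv.Perm (Fin n) × Fin (n + 1) => insertMax x.1 x.2 := by
    rw [Fintype.bijective_iff_injective_and_card]
    refine ⟨insertMax_injective, ?_⟩
    simp [Fintype.card_perm, Nat.factorial_succ, mul_comm]
  rw [eulerPoly, ← Fintype.sum_bijective _ hbij _ _ fun _ => rfl, Fintype.sum_prod_type]
  simp only [sum_X_pow_desNum_insertMax]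
  rw [eulerPoly, mul_sum, derivative_sum, mul_sum, ← sum_add_distrib]
  refine sum_congr rfl fun σ _ => ?_
  have hdes := desNum_le σ
  have hXd :
      X * derivative (X ^ desNum n σ : ℤ[X]) = (desNum n σ : ℤ[X]) * X ^ desNum n σ := by
    cases desNum n σ with
    | zero => simp
    | succ d =>
      simp only [derivative_X_pow_succ, map_add, map_natCast, map_one]
      push_cast
      ring
  push_cast [Nat.cast_sub (hdes.trans (Nat.sub_le n 1))]
  linear_combination (X - 1) * hXd

def shiftedEulerPoly (m : ℕ) : ℤ[X] :=
  if m = 0 then 1 else X * eulerPoly m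

theorem reflect_eulerPoly (m : ℕ) : reflect m (eulerPoly m) = shiftedEulerPoly m := by
  rcases m.eq_zero_or_pos with rfl | hm
  · simp [eulerPoly_zero, shiftedEulerPoly, reflect_one]
  rw [shiftedEulerPoly, if_neg hm.ne', eulerPoly, reflect_sum, mul_sum,
    ← Equiv.sum_comp (Equiv.mulRight Fin.revPerm)]
  refine sum_congr rfl fun σ _ => ?_
  have hdes := desNum_le σ
  simp only [Equiv.coe_mulRight]
  rw [desNum_mul_revPerm, reflect_monomial, revAt_le (by omega), ← pow_succ']
  congr 1
  omega

theorem binomialTransform_X_sub_one_eulerPoly :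
    binomialTransform (X - 1) eulerPoly = shiftedEulerPoly := by
  have hrec := binomialTransform_X_sub_one_succ eulerPoly eulerPoly_succ
  funext k
  induction k with
  | zero => simp [eulerPoly_zero, shiftedEulerPoly]
  | succ k ih =>
    rw [hrec, ih, shiftedEulerPoly, shiftedEulerPoly, if_neg k.succ_ne_zero, eulerPoly_succ]
    rcases k with _ | k
    · simp [eulerPoly_zero]
    · rw [if_neg k.succ_ne_zero, derivative_mul, derivative_X]
      push_cast
      ring

theorem binEulerPoly_eq_binomialTransform_one (n : ℕ) :
    binEulerPoly n = binomialTransform 1 shiftedEulerPoly n := by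
  rw [binEulerPoly, binomialTransform, range_eq_Ico, sum_eq_sum_Ico_succ_bot n.succ_pos, mul_sum]
  refine congrArg₂ (· + ·) (by simp [shiftedEulerPoly]) (sum_congr rfl fun m hm => ?_)
  rw [shiftedEulerPoly, if_neg (by rw [mem_Ico] at hm; omega), one_pow]
  ring

theorem binEulerPoly_eq_binomialTransform_X (n : ℕ) :
    binEulerPoly n = binomialTransform X eulerPoly n := by
  rw [binEulerPoly_eq_binomialTransform_one, ← binomialTransform_X_sub_one_eulerPoly,
    binomialTransform_binomialTransform, add_sub_cancel]

theorem reflect_binEulerPoly (n : ℕ) : reflect n (binEulerPoly n) = binEulerPoly n := by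
  conv_lhs => rw [binEulerPoly_eq_binomialTransform_X]
  rw [reflect_binomialTransform_X _ natDegree_eulerPoly_le]
  simp only [reflect_eulerPoly]
  exact (binEulerPoly_eq_binomialTransform_one n).symm

theorem binEuler_palindromic (n j : ℕ) (hj : j ≤ n) :
    (binEulerPoly n).coeff j = (binEulerPoly n).coeff (n - j) := by
  conv_lhs => rw [← reflect_binEulerPoly n]
  rw [coeff_reflect, revAt_le hj]
end
end

section
/- For all n ≥ 1, the Eulerian polynomial satisfies A_n(t) = Σ_{k=0}^{⌊(n-1)/2⌋} γ_{n,k} t^k (1+t)^{n-1-2k}, where γ_{n,k} is the number of permutations σ ∈ S_n with no double descents, no final descent, and exactly k descents. -/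
open Finset Polynomial

open scoped Classical

noncomputable section

/-!
Write `σ` as the word `w = (σ 1 + 1) ⋯ (σ n + 1)` read between two boundary letters `0`.
Then `w` has one descent more than `σ` (the final one into `0`), and `σ` has neither a double
descent nor a final descent iff `w` has no double descent. Valley hopping moves a double ascent
`x` of `w` to the right over the adjacent run of letters larger than `x`: it becomes a double
descent, the word gains one descent, and hopping `x` back to the left undoes the move. Let
`T(j, k)` be the set of words with `j` double descents and `k + 1` descents; such a word has
`n - 1 - 2k + j` double ascents. Double counting the pairs (word, hopping letter) gives
`(j + 1) · #T(j + 1, k + 1) = (n - 1 - 2k + j) · #T(j, k)`, hence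
`#T(j, k + j) = C(n - 1 - 2k, j) · #T(0, k)`, and summing over `j` produces `(1 + t)^(n - 1 - 2k)`.
-/
namespace ValleyHopping

/-! A list `l` is read as the word `p :: l ++ [0]`: left boundary `p`, right boundary `0`.
Double descents and double ascents are recorded by their values. -/

def doubleDescents (p : ℕ) : List ℕ → Finset ℕ
  | [] => ∅
  | a :: t => if t.headD 0 < a ∧ a < p then insert a (doubleDescents a t) else doubleDescents a t

def doubleAscents (p : ℕ) : List ℕ → Finset ℕ
  | [] => ∅
  | a :: t => if p < a ∧ a < t.headD 0 then insert a (doubleAscents a t) else doubleAscents a t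

def descentCount (p : ℕ) : List ℕ → ℕ
  | [] => if 0 < p then 1 else 0
  | a :: t => (if a < p then 1 else 0) + descentCount a t

def insertBeforeSmaller (x : ℕ) : List ℕ → List ℕ
  | [] => [x]
  | b :: t => if b < x then x :: b :: t else b :: insertBeforeSmaller x t

/-- Valley hopping: `x` jumps over the maximal run of larger letters to its right
(`hopRight`) or to its left (`hopLeft`). -/
def hopRight (x : ℕ) : List ℕ → List ℕ
  | [] => []
  | a :: t => if a = x then insertBeforeSmaller x t else a :: hopRight x t

def hopLeft (x : ℕ) (l : List ℕ) : List ℕ := (hopRight x l.reverse).reverse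

variable {x p : ℕ} {l : List ℕ}

theorem doubleDescents_subset (p : ℕ) (l : List ℕ) : doubleDescents p l ⊆ l.toFinset := by
  induction l generalizing p with
  | nil => simp [doubleDescents]
  | cons a t ih =>
    rw [doubleDescents, List.toFinset_cons]
    split_ifs
    · exact Finset.insert_subset_insert a (ih a)
    · exact (ih a).trans (Finset.subset_insert a _)

theorem doubleAscents_subset (p : ℕ) (l : List ℕ) : doubleAscents p l ⊆ l.toFinset := by
  induction l generalizing p with
  | nil => simp [doubleAscents]
  | cons a t ih =>
    rw [doubleAscents, List.toFinset_cons]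
    split_ifs
    · exact Finset.insert_subset_insert a (ih a)
    · exact (ih a).trans (Finset.subset_insert a _)

theorem notMem_doubleDescents (h : x ∉ l) : x ∉ doubleDescents p l :=
  fun hx => h (List.mem_toFinset.mp (doubleDescents_subset p l hx))

theorem notMem_doubleAscents (h : x ∉ l) : x ∉ doubleAscents p l :=
  fun hx => h (List.mem_toFinset.mp (doubleAscents_subset p l hx))

theorem disjoint_doubleDescents_doubleAscents (p : ℕ) (hl : l.Nodup) :
    Disjoint (doubleDescents p l) (doubleAscents p l) := by
  induction l generalizing p with
  | nil => simp [doubleDescents]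
  | cons a t ih =>
    obtain ⟨hat, ht⟩ := List.nodup_cons.mp hl
    have hDA := ih a ht
    have haD := notMem_doubleDescents (p := a) hat
    have haA := notMem_doubleAscents (p := a) hat
    rw [doubleDescents, doubleAscents]
    split_ifs <;> grind

theorem insertBeforeSmaller_perm (x : ℕ) (l : List ℕ) :
    (insertBeforeSmaller x l).Perm (x :: l) := by
  induction l with
  | nil => rfl
  | cons b t ih =>
    unfold insertBeforeSmaller
    split_ifs
    · rfl
    · exact (ih.cons b).trans (List.Perm.swap x b t)

theorem hopRight_perm (x : ℕ) (l : List ℕ) : (hopRight x l).Perm l := by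
  induction l with
  | nil => rfl
  | cons a t ih =>
    unfold hopRight
    split_ifs with h
    · exact h ▸ insertBeforeSmaller_perm a t
    · exact ih.cons a

theorem hopLeft_perm (x : ℕ) (l : List ℕ) : (hopLeft x l).Perm l :=
  (List.reverse_perm _).trans ((hopRight_perm x _).trans (List.reverse_perm l))

theorem headD_insertBeforeSmaller_lt_iff {b : ℕ} (h : x < b) (t : List ℕ) :
    (insertBeforeSmaller x t).headD 0 < b ↔ t.headD 0 < b := by
  cases t with
  | nil => simp [insertBeforeSmaller]; omega
  | cons c t => unfold insertBeforeSmaller; split_ifs <;> simp; omega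

theorem mem_doubleAscents_cons_self {a : ℕ} {t : List ℕ} (ha : a ∉ t) :
    a ∈ doubleAscents p (a :: t) ↔ p < a ∧ a < t.headD 0 := by
  rw [doubleAscents]
  split_ifs with h
  · exact iff_of_true (Finset.mem_insert_self a _) h
  · exact iff_of_false (notMem_doubleAscents ha) h

theorem mem_doubleAscents_cons_of_ne {a : ℕ} {t : List ℕ} (h : x ≠ a) :
    x ∈ doubleAscents p (a :: t) ↔ x ∈ doubleAscents a t := by
  rw [doubleAscents]
  split_ifs <;> simp [h]

theorem doubleDescents_insertBeforeSmaller {q : ℕ} (hx0 : 0 < x) (hq : x < q) (hx : x ∉ l) :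
    doubleDescents q (insertBeforeSmaller x l) = insert x (doubleDescents q l) := by
  induction l generalizing q with
  | nil => simp [doubleDescents, insertBeforeSmaller, hx0, hq]
  | cons b t ih =>
    obtain ⟨hbx, hxt⟩ : b ≠ x ∧ x ∉ t := by simpa [eq_comm] using hx
    rw [insertBeforeSmaller]
    split_ifs with hb
    · simp [doubleDescents, hb, hq, hb.trans hq]
    · have hxb : x < b := by omega
      simp only [doubleDescents, headD_insertBeforeSmaller_lt_iff hxb, ih hxb hxt]
      split_ifs <;> simp [Finset.insert_comm]

theorem descentCount_insertBeforeSmaller {q : ℕ} (hx0 : 0 < x) (hq : x < q) (hx : x ∉ l) :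
    descentCount q (insertBeforeSmaller x l) = descentCount q l + 1 := by
  induction l generalizing q with
  | nil => simp [descentCount, insertBeforeSmaller, hx0, hq, hx0.trans hq]
  | cons b t ih =>
    obtain ⟨hbx, hxt⟩ : b ≠ x ∧ x ∉ t := by simpa [eq_comm] using hx
    rw [insertBeforeSmaller]
    split_ifs with hb
    · simp [descentCount, hb, hq, hb.trans hq]
      omega
    · simp only [descentCount, ih (by omega : x < b) hxt]
      omega

theorem headD_hopRight_lt_iff {a : ℕ} (hl : l.Nodup) (hx : x ∈ doubleAscents a l) :
    (hopRight x l).headD 0 < a ↔ l.headD 0 < a := by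
  cases l with
  | nil => simp [doubleAscents] at hx
  | cons c t =>
    rw [hopRight]
    split_ifs with hc
    · subst hc
      obtain ⟨hac, hct⟩ := (mem_doubleAscents_cons_self (List.nodup_cons.mp hl).1).mp hx
      cases t with
      | nil => simp at hct
      | cons b t =>
        simp only [List.headD_cons] at hct
        simp [insertBeforeSmaller, hct.not_gt]
        omega
    · simp

theorem doubleDescents_hopRight (hl : l.Nodup) (hx : x ∈ doubleAscents p l) :
    doubleDescents p (hopRight x l) = insert x (doubleDescents p l) := by
  induction l generalizing p with
  | nil => simp [doubleAscents] at hx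
  | cons a t ih =>
    obtain ⟨hat, ht⟩ := List.nodup_cons.mp hl
    by_cases hax : a = x
    · subst hax
      obtain ⟨hpa, hat'⟩ := (mem_doubleAscents_cons_self hat).mp hx
      cases t with
      | nil => simp at hat'
      | cons b t =>
        simp only [List.headD_cons] at hat'
        have hxt : a ∉ t := fun h => hat (List.mem_cons_of_mem b h)
        simp [hopRight, insertBeforeSmaller, doubleDescents, hat'.not_gt,
          doubleDescents_insertBeforeSmaller (by omega) hat' hxt, (hpa.trans hat').not_gt]
    · rw [mem_doubleAscents_cons_of_ne (Ne.symm hax)] at hx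
      simp only [hopRight, hax, if_false, doubleDescents, headD_hopRight_lt_iff ht hx, ih ht hx]
      split_ifs <;> simp [Finset.insert_comm]

theorem descentCount_hopRight (hl : l.Nodup) (hx : x ∈ doubleAscents p l) :
    descentCount p (hopRight x l) = descentCount p l + 1 := by
  induction l generalizing p with
  | nil => simp [doubleAscents] at hx
  | cons a t ih =>
    obtain ⟨hat, ht⟩ := List.nodup_cons.mp hl
    by_cases hax : a = x
    · subst hax
      obtain ⟨hpa, hat'⟩ := (mem_doubleAscents_cons_self hat).mp hx
      cases t with
      | nil => simp at hat'
      | cons b t =>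
        simp only [List.headD_cons] at hat'
        have hxt : a ∉ t := fun h => hat (List.mem_cons_of_mem b h)
        simp [hopRight, insertBeforeSmaller, descentCount, hat'.not_gt, hpa.not_gt,
          descentCount_insertBeforeSmaller (by omega) hat' hxt, (hpa.trans hat').not_gt]
    · rw [mem_doubleAscents_cons_of_ne (Ne.symm hax)] at hx
      simp only [hopRight, hax, if_false, descentCount, ih ht hx]
      omega

theorem exists_of_mem_doubleAscents (hx : x ∈ doubleAscents p l) :
    ∃ u v, l = u ++ x :: v ∧ u.getLastD p < x ∧ x < v.headD 0 := by
  induction l generalizing p with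
  | nil => simp [doubleAscents] at hx
  | cons a t ih =>
    have step : x ∈ doubleAscents a t → ∃ u v, a :: t = u ++ x :: v ∧ u.getLastD p < x ∧
        x < v.headD 0 := fun hx => by
      obtain ⟨u, v, rfl, h⟩ := ih hx
      exact ⟨a :: u, v, rfl, by rwa [List.getLastD_cons]⟩
    rw [doubleAscents] at hx
    split_ifs at hx with h
    · rcases Finset.mem_insert.mp hx with rfl | hx
      · exact ⟨[], t, rfl, h⟩
      · exact step hx
    · exact step hx

theorem exists_of_mem_doubleDescents (hx : x ∈ doubleDescents p l) :
    ∃ u v, l = u ++ x :: v ∧ v.headD 0 < x ∧ x < u.getLastD p := by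
  induction l generalizing p with
  | nil => simp [doubleDescents] at hx
  | cons a t ih =>
    have step : x ∈ doubleDescents a t → ∃ u v, a :: t = u ++ x :: v ∧ v.headD 0 < x ∧
        x < u.getLastD p := fun hx => by
      obtain ⟨u, v, rfl, h⟩ := ih hx
      exact ⟨a :: u, v, rfl, by rwa [List.getLastD_cons]⟩
    rw [doubleDescents] at hx
    split_ifs at hx with h
    · rcases Finset.mem_insert.mp hx with rfl | hx
      · exact ⟨[], t, rfl, h⟩
      · exact step hx
    · exact step hx

theorem mem_doubleAscents_append_cons {u v : List ℕ} (hu : u.getLastD p < x)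
    (hv : x < v.headD 0) : x ∈ doubleAscents p (u ++ x :: v) := by
  induction u generalizing p with
  | nil =>
    rw [List.nil_append, doubleAscents, if_pos ⟨hu, hv⟩]
    exact Finset.mem_insert_self x _
  | cons a u ih =>
    rw [List.getLastD_cons] at hu
    rw [List.cons_append, doubleAscents]
    split_ifs
    · exact Finset.mem_insert_of_mem (ih hu)
    · exact ih hu

theorem exists_eq_append_of_forall_lt (hx0 : 0 < x) (hx : x ∉ l) :
    ∃ R S, l = R ++ S ∧ (∀ a ∈ R, x < a) ∧ S.headD 0 < x := by
  induction l with
  | nil => exact ⟨[], [], rfl, by simp, hx0⟩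
  | cons a t ih =>
    obtain ⟨hax, hxt⟩ : a ≠ x ∧ x ∉ t := by simpa [eq_comm] using hx
    by_cases ha : x < a
    · obtain ⟨R, S, rfl, hR, hS⟩ := ih hxt
      exact ⟨a :: R, S, rfl, by simpa [ha] using hR, hS⟩
    · exact ⟨[], a :: t, rfl, by simp, by simp; omega⟩

theorem hopRight_append_of_notMem {u : List ℕ} (hx : x ∉ u) (l : List ℕ) :
    hopRight x (u ++ l) = u ++ hopRight x l := by
  induction u with
  | nil => rfl
  | cons a u ih =>
    obtain ⟨hax, hxu⟩ : a ≠ x ∧ x ∉ u := by simpa [eq_comm] using hx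
    simp [hopRight, hax, ih hxu]

theorem insertBeforeSmaller_append {R : List ℕ} (hR : ∀ a ∈ R, x < a) (S : List ℕ) :
    insertBeforeSmaller x (R ++ S) = R ++ insertBeforeSmaller x S := by
  induction R with
  | nil => rfl
  | cons a R ih =>
    simp only [List.mem_cons, forall_eq_or_imp] at hR
    simp [insertBeforeSmaller, hR.1.not_gt, ih hR.2]

theorem insertBeforeSmaller_of_headD_lt (h : l.headD 0 < x) :
    insertBeforeSmaller x l = x :: l := by
  cases l with
  | nil => rfl
  | cons b t => simp_all [insertBeforeSmaller]

theorem hopRight_append_cons_append {P R S : List ℕ} (hP : x ∉ P) (hR : ∀ a ∈ R, x < a)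
    (hS : S.headD 0 < x) : hopRight x (P ++ x :: (R ++ S)) = P ++ (R ++ x :: S) := by
  rw [hopRight_append_of_notMem hP, hopRight, if_pos rfl, insertBeforeSmaller_append hR,
    insertBeforeSmaller_of_headD_lt hS]

theorem notMem_of_nodup_append_cons {u v : List ℕ} (h : (u ++ x :: v).Nodup) :
    x ∉ u ∧ x ∉ v := by
  simpa using (List.nodup_cons.mp (List.nodup_middle.mp h)).1

theorem hopLeft_hopRight (hl : l.Nodup) (hx : x ∈ doubleAscents 0 l) :
    hopLeft x (hopRight x l) = l := by
  obtain ⟨P, Q, rfl, hP, hQ⟩ := exists_of_mem_doubleAscents hx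
  obtain ⟨hxP, hxQ⟩ := notMem_of_nodup_append_cons hl
  obtain ⟨R, S, rfl, hR, hS⟩ := exists_eq_append_of_forall_lt (Nat.zero_lt_of_lt hP) hxQ
  obtain ⟨-, hxS⟩ : x ∉ R ∧ x ∉ S := by simpa using hxQ
  have hrev : (P ++ (R ++ x :: S)).reverse = S.reverse ++ x :: (R.reverse ++ P.reverse) := by
    simp
  rw [hopRight_append_cons_append hxP hR hS, hopLeft, hrev,
    hopRight_append_cons_append (by simpa using hxS) (by simpa using hR) (by simpa using hP)]
  simp

theorem hopRight_hopLeft (hl : l.Nodup) (hx : x ∈ doubleDescents 0 l) :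
    x ∈ doubleAscents 0 (hopLeft x l) ∧ hopRight x (hopLeft x l) = l := by
  obtain ⟨U, V, rfl, hV, hU⟩ := exists_of_mem_doubleDescents hx
  obtain ⟨hxU, hxV⟩ := notMem_of_nodup_append_cons hl
  obtain ⟨R, S, hRS, hR, hS⟩ :=
    exists_eq_append_of_forall_lt (Nat.zero_lt_of_lt hV) (by simpa using hxU : x ∉ U.reverse)
  have hUeq : U = S.reverse ++ R.reverse := by
    rw [← List.reverse_append, ← hRS, List.reverse_reverse]
  have hhop : hopLeft x (U ++ x :: V) = S.reverse ++ x :: (R.reverse ++ V) := by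
    rw [hopLeft, show (U ++ x :: V).reverse = V.reverse ++ x :: (R ++ S) by simp [hRS],
      hopRight_append_cons_append (by simpa using hxV) hR hS]
    simp
  obtain ⟨r, R', hr⟩ : ∃ r R', R.reverse = r :: R' := by
    refine List.exists_cons_of_ne_nil fun h => ?_
    simp only [List.reverse_eq_nil_iff.mp h, List.nil_append] at hRS
    rw [← hRS] at hS
    simp at hS hU
    omega
  refine ⟨?_, ?_⟩
  · rw [hhop]
    refine mem_doubleAscents_append_cons (by simpa using hS) ?_
    simpa [hr] using hR r (List.mem_reverse.mp (hr ▸ List.mem_cons_self))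
  · obtain ⟨hxS, -⟩ : x ∉ S ∧ x ∉ R := by simpa [hUeq] using hxU
    rw [hhop, hopRight_append_cons_append (by simpa using hxS) (by simpa using hR) hV, hUeq]
    simp

theorem card_doubleAscents_add_two_mul_descentCount (hne : l ≠ []) (h0 : 0 ∉ l)
    (hl : (p :: l).Nodup) :
    #(doubleAscents p l) + 2 * descentCount p l =
      l.length + 1 + #(doubleDescents p l) + if l.headD 0 < p then 1 else 0 := by
  induction l generalizing p with
  | nil => exact absurd rfl hne
  | cons a t ih =>
    obtain ⟨hpa, hat⟩ : p ≠ a ∧ a ∉ t := by simp_all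
    have ha0 : 0 < a := Nat.pos_of_ne_zero fun h => h0 (h ▸ List.mem_cons_self)
    cases t with
    | nil =>
      simp only [doubleAscents, doubleDescents, descentCount]
      grind
    | cons b t =>
      have hih := ih (p := a) (List.cons_ne_nil b t) (by simp_all) (List.nodup_cons.mp hl).2
      rw [doubleAscents.eq_2 p, doubleDescents.eq_2 p, descentCount.eq_2 p,
        apply_ite Finset.card, apply_ite Finset.card,
        Finset.card_insert_of_notMem (notMem_doubleAscents hat),
        Finset.card_insert_of_notMem (notMem_doubleDescents hat)]
      simp only [List.headD_cons, List.length_cons] at hih ⊢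
      grind

theorem card_doubleDescents_lt_descentCount (hne : l ≠ []) (h0 : 0 ∉ l) :
    #(doubleDescents p l) < descentCount p l := by
  induction l generalizing p with
  | nil => exact absurd rfl hne
  | cons a t ih =>
    have ha0 : 0 < a := Nat.pos_of_ne_zero fun h => h0 (h ▸ List.mem_cons_self)
    cases t with
    | nil =>
      simp only [doubleDescents, descentCount]
      grind
    | cons b t =>
      have hih := ih (p := a) (List.cons_ne_nil b t) (by simp_all)
      have hins := Finset.card_insert_le a (doubleDescents a (b :: t))
      rw [doubleDescents, descentCount]
      split_ifs <;> omega

theorem descentCount_eq_sum (p : ℕ) (l : List ℕ) :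
    descentCount p l = ∑ i ∈ range (l.length + 1),
      if (p :: l).getD (i + 1) 0 < (p :: l).getD i 0 then 1 else 0 := by
  induction l generalizing p with
  | nil => simp only [descentCount, List.length_nil, zero_add, Finset.sum_range_one,
      List.getD_cons_succ, List.getD_nil, List.getD_cons_zero]
  | cons a t ih =>
    rw [descentCount, ih a, List.length_cons, Finset.sum_range_succ' _ (t.length + 1), add_comm]
    simp only [List.getD_cons_succ, List.getD_cons_zero]

theorem doubleDescents_eq_empty_iff (p : ℕ) (l : List ℕ) :
    doubleDescents p l = ∅ ↔ ∀ i, ¬ ((p :: l).getD (i + 2) 0 < (p :: l).getD (i + 1) 0 ∧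
      (p :: l).getD (i + 1) 0 < (p :: l).getD i 0) := by
  induction l generalizing p with
  | nil => simp [doubleDescents]
  | cons a t ih =>
    have hhead : t.headD 0 = t.getD 0 0 := by cases t <;> rfl
    rw [doubleDescents, hhead]
    split_ifs with h
    · simp only [Finset.insert_ne_empty, false_iff, not_forall, not_not]
      exact ⟨0, by simpa using h⟩
    · rw [ih a]
      refine ⟨fun H i => ?_, fun H i => by simpa using H (i + 1)⟩
      cases i with
      | zero => simpa using h
      | succ i => simpa using H i

/-- Letters are shifted by one, so that the right boundary `0` is smaller than all of them. -/
def word (n : ℕ) (σ : Equiv.Perm (Fin n)) : List ℕ := List.ofFn fun i => (σ i : ℕ) + 1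

variable {n : ℕ}

@[simp] theorem length_word (σ : Equiv.Perm (Fin n)) : (word n σ).length = n := by simp [word]

theorem word_injective (n : ℕ) : Function.Injective (word n) := by
  intro σ τ h
  ext i
  simpa using congrFun (List.ofFn_injective h) i

theorem nodup_word (σ : Equiv.Perm (Fin n)) : (word n σ).Nodup :=
  List.nodup_ofFn.mpr fun i j h => σ.injective (Fin.ext (by simpa using h))

theorem zero_notMem_word (σ : Equiv.Perm (Fin n)) : 0 ∉ word n σ := by simp [word]

theorem word_perm_word_one (σ : Equiv.Perm (Fin n)) : (word n σ).Perm (word n 1) :=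
  σ.ofFn_comp_perm fun i => (i : ℕ) + 1

theorem getD_word (σ : Equiv.Perm (Fin n)) (i : ℕ) :
    (word n σ).getD i 0 = if i < n then pv n σ i + 1 else 0 := by
  split_ifs with h
  · rw [List.getD_eq_getElem _ _ (by simpa using h)]
    simp [word, pv, h]
  · exact List.getD_eq_default _ _ (by simpa using h)

def permWords (n : ℕ) : Finset (List ℕ) := univ.image (word n)

theorem mem_permWords {u : List ℕ} : u ∈ permWords n ↔ u.Perm (word n 1) := by
  have hsub : permWords n ⊆ (word n 1).permutations.toFinset := by
    simp [permWords, Finset.image_subset_iff, List.mem_permutations, word_perm_word_one]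
  have hcard : #(word n 1).permutations.toFinset ≤ #(permWords n) := by
    rw [List.toFinset_card_of_nodup (List.nodup_permutations _ (nodup_word 1)),
      List.length_permutations, permWords, Finset.card_image_of_injective _ (word_injective n)]
    simp [Fintype.card_perm]
  rw [Finset.eq_of_subset_of_card_le hsub hcard, List.mem_toFinset, List.mem_permutations]

theorem descentCount_word (hn : 1 ≤ n) (σ : Equiv.Perm (Fin n)) :
    descentCount 0 (word n σ) = desNum n σ + 1 := by
  obtain ⟨m, rfl⟩ := Nat.exists_eq_add_of_le' hn
  rw [descentCount_eq_sum, Finset.sum_range_succ', length_word, Finset.sum_range_succ, desNum,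
    desSet, Finset.card_filter]
  simp only [List.getD_cons_succ, List.getD_cons_zero, getD_word, lt_irrefl, if_false,
    Nat.lt_succ_self, if_true, Nat.zero_lt_succ, Nat.not_lt_zero, add_zero, Nat.add_sub_cancel]
  congr 1
  refine Finset.sum_congr rfl fun i hi => ?_
  simp [mem_range.mp hi, (mem_range.mp hi).trans (Nat.lt_succ_self m)]

theorem doubleDescents_word_eq_empty_iff (σ : Equiv.Perm (Fin n)) :
    doubleDescents 0 (word n σ) = ∅ ↔
      ¬ HasDoubleDescent n σ ∧ ¬ HasFinalDescent n σ := by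
  rw [doubleDescents_eq_empty_iff]
  have htriple : ∀ j, ((word n σ).getD (j + 2) 0 < (word n σ).getD (j + 1) 0 ∧
      (word n σ).getD (j + 1) 0 < (word n σ).getD j 0) ↔
      (j + 2 < n ∧ pv n σ (j + 2) < pv n σ (j + 1) ∧ pv n σ (j + 1) < pv n σ j) ∨
      (j + 2 = n ∧ pv n σ (j + 1) < pv n σ j) := by
    intro j
    simp only [getD_word]
    split_ifs <;> omega
  constructor
  · intro H
    refine ⟨fun ⟨i, hi, h⟩ => H (i + 1) ((htriple i).mpr (Or.inl ⟨hi, h⟩)),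
      fun ⟨h2, hf⟩ => ?_⟩
    obtain ⟨j, rfl⟩ : ∃ j, n = j + 2 := ⟨n - 2, by omega⟩
    exact H (j + 1) ((htriple j).mpr (Or.inr ⟨rfl, hf⟩))
  · rintro ⟨hdd, hfd⟩ (_ | j) h
    · simp at h
    · rcases (htriple j).mp h with ⟨hi, h'⟩ | ⟨rfl, h'⟩
      · exact hdd ⟨j, hi, h'⟩
      · exact hfd ⟨by omega, h'⟩

theorem nodup_of_mem_permWords {w : List ℕ} (hw : w ∈ permWords n) : w.Nodup :=
  (mem_permWords.mp hw).nodup_iff.mpr (nodup_word 1)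

theorem zero_notMem_of_mem_permWords {w : List ℕ} (hw : w ∈ permWords n) : 0 ∉ w :=
  fun h => zero_notMem_word 1 ((mem_permWords.mp hw).subset h)

theorem ne_nil_of_mem_permWords (hn : 1 ≤ n) {w : List ℕ} (hw : w ∈ permWords n) : w ≠ [] :=
  List.ne_nil_of_length_pos ((mem_permWords.mp hw).length_eq.trans (length_word 1) ▸ hn)

theorem card_doubleAscents_add_of_mem_permWords (hn : 1 ≤ n) {w : List ℕ}
    (hw : w ∈ permWords n) :
    #(doubleAscents 0 w) + 2 * descentCount 0 w = n + 1 + #(doubleDescents 0 w) := by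
  have h0 := zero_notMem_of_mem_permWords hw
  simpa [(mem_permWords.mp hw).length_eq] using card_doubleAscents_add_two_mul_descentCount
    (ne_nil_of_mem_permWords hn hw) h0 (List.nodup_cons.mpr ⟨h0, nodup_of_mem_permWords hw⟩)

theorem card_doubleDescents_lt_of_mem_permWords (hn : 1 ≤ n) {w : List ℕ}
    (hw : w ∈ permWords n) :
    #(doubleDescents 0 w) < descentCount 0 w :=
  card_doubleDescents_lt_descentCount (ne_nil_of_mem_permWords hn hw)
    (zero_notMem_of_mem_permWords hw)

/-- Words with `j` double descents and `k` descents, the final descent into `0` not counted. -/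
def statWords (n j k : ℕ) : Finset (List ℕ) :=
  (permWords n).filter fun w => #(doubleDescents 0 w) = j ∧ descentCount 0 w = k + 1

theorem hopRight_mem_statWords {j k x : ℕ} {w : List ℕ} (hw : w ∈ statWords n j k)
    (hx : x ∈ doubleAscents 0 w) :
    hopRight x w ∈ statWords n (j + 1) (k + 1) ∧ x ∈ doubleDescents 0 (hopRight x w) := by
  obtain ⟨hwn, hj, hk⟩ := Finset.mem_filter.mp hw
  have hnd := nodup_of_mem_permWords hwn
  have hdd := doubleDescents_hopRight hnd hx
  have hxdd : x ∉ doubleDescents 0 w :=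
    Finset.disjoint_right.mp (disjoint_doubleDescents_doubleAscents 0 hnd) hx
  refine ⟨Finset.mem_filter.mpr ⟨?_, ?_, ?_⟩, hdd ▸ Finset.mem_insert_self x _⟩
  · exact mem_permWords.mpr ((hopRight_perm x w).trans (mem_permWords.mp hwn))
  · rw [hdd, Finset.card_insert_of_notMem hxdd, hj]
  · rw [descentCount_hopRight hnd hx, hk]

theorem hopLeft_mem_statWords {j k x : ℕ} {w : List ℕ} (hw : w ∈ statWords n (j + 1) (k + 1))
    (hx : x ∈ doubleDescents 0 w) :
    hopLeft x w ∈ statWords n j k ∧ x ∈ doubleAscents 0 (hopLeft x w) := by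
  obtain ⟨hwn, hj, hk⟩ := Finset.mem_filter.mp hw
  obtain ⟨hxda, hinv⟩ := hopRight_hopLeft (nodup_of_mem_permWords hwn) hx
  have hmem : hopLeft x w ∈ permWords n :=
    mem_permWords.mpr ((hopLeft_perm x w).trans (mem_permWords.mp hwn))
  have hnd := nodup_of_mem_permWords hmem
  have hdd := doubleDescents_hopRight hnd hxda
  have hxdd : x ∉ doubleDescents 0 (hopLeft x w) :=
    Finset.disjoint_right.mp (disjoint_doubleDescents_doubleAscents 0 hnd) hxda
  rw [hinv] at hdd
  refine ⟨Finset.mem_filter.mpr ⟨hmem, ?_, ?_⟩, hxda⟩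
  · rw [hdd, Finset.card_insert_of_notMem hxdd] at hj
    omega
  · have hdes := descentCount_hopRight hnd hxda
    rw [hinv] at hdes
    omega

theorem card_sigma_doubleAscents_eq (n j k : ℕ) :
    #((statWords n j k).sigma fun w => doubleAscents 0 w) =
      #((statWords n (j + 1) (k + 1)).sigma fun w => doubleDescents 0 w) := by
  refine Finset.card_bij' (fun p _ => ⟨hopRight p.2 p.1, p.2⟩)
    (fun p _ => ⟨hopLeft p.2 p.1, p.2⟩) (fun ⟨w, x⟩ h => ?_) (fun ⟨w, x⟩ h => ?_)
    (fun ⟨w, x⟩ h => ?_) (fun ⟨w, x⟩ h => ?_)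
  all_goals obtain ⟨hw, hx⟩ := Finset.mem_sigma.mp h
  · exact Finset.mem_sigma.mpr (hopRight_mem_statWords hw hx)
  · exact Finset.mem_sigma.mpr (hopLeft_mem_statWords hw hx)
  · simp [hopLeft_hopRight (nodup_of_mem_permWords (Finset.mem_filter.mp hw).1) hx]
  · simp [(hopRight_hopLeft (nodup_of_mem_permWords (Finset.mem_filter.mp hw).1) hx).2]

theorem card_statWords_succ_mul (hn : 1 ≤ n) (j k : ℕ) :
    #(statWords n (j + 1) (k + 1)) * (j + 1) = #(statWords n j k) * (n + j - (2 * k + 1)) := by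
  have h := card_sigma_doubleAscents_eq n j k
  rw [Finset.card_sigma, Finset.card_sigma, Finset.sum_const_nat, Finset.sum_const_nat] at h
  · exact h.symm
  · exact fun w hw => (Finset.mem_filter.mp hw).2.1
  · intro w hw
    obtain ⟨hwn, hj, hk⟩ := Finset.mem_filter.mp hw
    have := card_doubleAscents_add_of_mem_permWords hn hwn
    omega

theorem card_statWords_eq_choose_mul (hn : 1 ≤ n) (j k : ℕ) :
    #(statWords n j (k + j)) = (n - 1 - 2 * k).choose j * #(statWords n 0 k) := by
  induction j with
  | zero => simp
  | succ j ih =>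
    have h := card_statWords_succ_mul hn j (k + j)
    rw [ih, show n + j - (2 * (k + j) + 1) = n - 1 - 2 * k - j by omega, mul_right_comm,
      ← Nat.choose_succ_right_eq, mul_right_comm] at h
    exact Nat.eq_of_mul_eq_mul_right j.succ_pos h

theorem card_statWords_zero (hn : 1 ≤ n) (k : ℕ) :
    #(statWords n 0 k) = #{σ : Equiv.Perm (Fin n) |
      ¬ HasDoubleDescent n σ ∧ ¬ HasFinalDescent n σ ∧ desNum n σ = k} := by
  rw [statWords, permWords, Finset.filter_image,
    Finset.card_image_of_injective _ (word_injective n)]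
  refine congrArg _ (Finset.filter_congr fun σ _ => ?_)
  rw [Finset.card_eq_zero, doubleDescents_word_eq_empty_iff, descentCount_word hn, and_assoc,
    Nat.add_right_cancel_iff]

theorem eulerPoly_eq_sum_permWords (hn : 1 ≤ n) :
    eulerPoly n = ∑ w ∈ permWords n, X ^ (descentCount 0 w - 1) := by
  rw [eulerPoly, permWords, Finset.sum_image fun σ _ τ _ h => word_injective n h]
  simp [descentCount_word hn]

theorem sum_filter_descentCount_sub_card_doubleDescents_eq (hn : 1 ≤ n) (k : ℕ) :
    ∑ w ∈ permWords n with descentCount 0 w - 1 - #(doubleDescents 0 w) = k,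
      (X : ℤ[X]) ^ (descentCount 0 w - 1) =
      (#(statWords n 0 k) : ℤ[X]) * X ^ k * (1 + X) ^ (n - 1 - 2 * k) := by
  rw [← Finset.sum_fiberwise_of_maps_to (g := fun w => #(doubleDescents 0 w))
    (t := range (n - 1 - 2 * k + 1))]
  · rw [add_comm (1 : ℤ[X]), add_pow, Finset.mul_sum]
    refine Finset.sum_congr rfl fun j _ => ?_
    have hfiber : {w ∈ {w ∈ permWords n | descentCount 0 w - 1 - #(doubleDescents 0 w) = k} |
        #(doubleDescents 0 w) = j} = statWords n j (k + j) := by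
      rw [Finset.filter_filter]
      refine Finset.filter_congr fun w hw => ?_
      have := card_doubleDescents_lt_of_mem_permWords hn hw
      constructor <;> rintro ⟨h1, h2⟩ <;> constructor <;> omega
    have hterm : ∀ w ∈ statWords n j (k + j),
        (X : ℤ[X]) ^ (descentCount 0 w - 1) = X ^ (k + j) := fun w hw => by
      rw [(Finset.mem_filter.mp hw).2.2, Nat.add_sub_cancel]
    rw [hfiber, Finset.sum_congr rfl hterm, Finset.sum_const, card_statWords_eq_choose_mul hn,
      nsmul_eq_mul]
    push_cast
    ring
  · intro w hw
    obtain ⟨hwn, hk⟩ := Finset.mem_filter.mp hw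
    have := card_doubleAscents_add_of_mem_permWords hn hwn
    have := card_doubleDescents_lt_of_mem_permWords hn hwn
    rw [Finset.mem_range]
    omega

end ValleyHopping

theorem euler_gamma_positivity (n : ℕ) (hn : 1 ≤ n) :
    eulerPoly n = ∑ k ∈ Finset.range ((n - 1) / 2 + 1),
      ((Finset.univ.filter fun σ : Equiv.Perm (Fin n) =>
          ¬ HasDoubleDescent n σ ∧ ¬ HasFinalDescent n σ ∧ desNum n σ = k).card :
            Polynomial ℤ) * X ^ k * (1 + X) ^ (n - 1 - 2 * k) := by
  open ValleyHopping in
  rw [eulerPoly_eq_sum_permWords hn, ← Finset.sum_fiberwise_of_maps_to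
    (g := fun w => descentCount 0 w - 1 - #(doubleDescents 0 w))]
  · refine Finset.sum_congr rfl fun k _ => ?_
    rw [sum_filter_descentCount_sub_card_doubleDescents_eq hn k, card_statWords_zero hn k]
  · intro w hw
    have := card_doubleAscents_add_of_mem_permWords hn hw
    have := card_doubleDescents_lt_of_mem_permWords hn hw
    rw [Finset.mem_range]
    omega
end
end

section
/- The inversion number and the major index of the inverse are equidistributed on each descent class: for every subset J ⊆ [n-1], Σ_{σ ∈ S_n, Des(σ)=J} q^{inv(σ)} = Σ_{σ ∈ S_n, Des(σ)=J} q^{maj(σ^{-1})}. -/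
open Finset Polynomial

open scoped Classical

noncomputable section

/-!
Foata's bijection `phi` on words with distinct letters turns the major index into the inversion
number, `inv (phi w) = maj w`, and keeps the relative order of any two letters that no third
letter separates in value, such as `i` and `i + 1`. On the word of a permutation `τ` the latter
says that `phi` preserves the descent set of `τ⁻¹`. Hence `σ ↦ (phi σ⁻¹)⁻¹` maps each descent class
onto itself and carries `maj σ⁻¹` to `inv`, since `inv σ⁻¹ = inv σ`.

`phi` is built letter by letter, `phi (w ++ [x]) = gamma x (phi w) ++ [x]`, where `gamma x u`
cuts `u` after each letter on the same side of `x` as the last letter of `u` and moves the last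
letter of every block to its front. A block is a run of letters on one side of `x` closed by a
letter on the other side, so cycling it changes `inv` by the length of the run, up or down
according to that side. Together with the inversions formed by `x` itself, appending `x` adds
`|u|` inversions when `x` is below the last letter of `u` and none otherwise, just like `maj`.
Cutting the reversed word into blocks in the same way inverts `gamma`, so `phi` is injective.
-/

namespace Foata

open scoped List

theorem pair_sublist_append_iff {α : Type*} {a b : α} {u v : List α} :
    [a, b] <+ u ++ v ↔ [a, b] <+ u ∨ (a ∈ u ∧ b ∈ v) ∨ [a, b] <+ v := by
  rw [List.sublist_append_iff]
  constructor
  · rintro ⟨l₁, l₂, h, h₁, h₂⟩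
    rcases l₁ with _ | ⟨c, _ | ⟨d, _ | ⟨_, _⟩⟩⟩ <;> simp at h
    · exact Or.inr (Or.inr (h ▸ h₂))
    · obtain ⟨rfl, rfl⟩ := h
      exact Or.inr (Or.inl ⟨List.singleton_sublist.mp h₁, List.singleton_sublist.mp h₂⟩)
    · obtain ⟨rfl, rfl, rfl⟩ := h
      exact Or.inl h₁
  · rintro (h | ⟨ha, hb⟩ | h)
    · exact ⟨[a, b], [], by simp, h, List.nil_sublist _⟩
    · exact ⟨[a], [b], rfl, List.singleton_sublist.mpr ha, List.singleton_sublist.mpr hb⟩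
    · exact ⟨[], [a, b], rfl, List.nil_sublist _, h⟩

theorem pair_sublist_iff_idxOf_lt {α : Type*} [BEq α] [LawfulBEq α] {l : List α} (hl : l.Nodup)
    {a b : α} (ha : a ∈ l) (hb : b ∈ l) : [a, b] <+ l ↔ l.idxOf a < l.idxOf b := by
  constructor
  · intro h
    obtain ⟨is, his, hlt⟩ := List.sublist_eq_map_getElem h
    rcases is with _ | ⟨i, _ | ⟨j, _ | _⟩⟩ <;> simp at his
    obtain ⟨rfl, rfl⟩ := his
    simpa [hl.idxOf_getElem] using hlt
  · intro h
    have := List.map_getElem_sublist (l := l)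
      (is := [⟨_, List.idxOf_lt_length_iff.mpr ha⟩, ⟨_, List.idxOf_lt_length_iff.mpr hb⟩])
      (by simpa using h)
    simpa [List.getElem_idxOf] using this

def inv : List ℕ → ℕ
  | [] => 0
  | a :: t => t.countP (· < a) + inv t

def maj (w : List ℕ) : ℕ :=
  ∑ i ∈ range (w.length - 1), if w.getD (i + 1) 0 < w.getD i 0 then i + 1 else 0

def crossInv (u v : List ℕ) : ℕ := (u.map fun a => v.countP (· < a)).sum

theorem inv_append (u v : List ℕ) : inv (u ++ v) = inv u + inv v + crossInv u v := by
  induction u with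
  | nil => simp [inv, crossInv]
  | cons a t ih =>
    simp only [List.cons_append, inv, ih, crossInv, List.map_cons, List.sum_cons,
      List.countP_append]
    ring

theorem crossInv_singleton (u : List ℕ) (x : ℕ) : crossInv u [x] = u.countP (x < ·) := by
  induction u with
  | nil => rfl
  | cons a t ih =>
    simp only [crossInv, List.map_cons, List.sum_cons, List.countP_cons, List.countP_nil] at ih ⊢
    rw [ih]
    split_ifs <;> simp [add_comm]

theorem crossInv_congr {u u' v v' : List ℕ} (hu : u.Perm u') (hv : v.Perm v') :
    crossInv u v = crossInv u' v' := by
  unfold crossInv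
  rw [(hu.map _).sum_eq]
  exact congrArg List.sum (List.map_congr_left fun a _ => hv.countP_eq _)

theorem inv_cons_add_countP (e : ℕ) (s : List ℕ) :
    inv (e :: s) + s.countP (e < ·) = inv (s ++ [e]) + s.countP (· < e) := by
  simp only [inv, inv_append, crossInv_singleton, List.countP_nil]
  ring

theorem inv_cons_add_length {e : ℕ} {s : List ℕ} (hs : ∀ a ∈ s, e < a) :
    inv (e :: s) + s.length = inv (s ++ [e]) := by
  have := inv_cons_add_countP e s
  rwa [List.countP_eq_length.mpr (by simpa using hs),
    List.countP_eq_zero.mpr (by simpa using fun a ha => (hs a ha).le), add_zero] at this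

theorem inv_cons_eq_add_length {e : ℕ} {s : List ℕ} (hs : ∀ a ∈ s, a < e) :
    inv (e :: s) = inv (s ++ [e]) + s.length := by
  have := inv_cons_add_countP e s
  rwa [List.countP_eq_zero.mpr (by simpa using fun a ha => (hs a ha).le),
    List.countP_eq_length.mpr (by simpa using hs), add_zero] at this

theorem maj_append_singleton (w : List ℕ) (x : ℕ) :
    maj (w ++ [x]) = maj w + if x < w.getLastD 0 then w.length else 0 := by
  rcases w.eq_nil_or_concat' with rfl | ⟨v, y, rfl⟩
  · simp [maj]
  · have hlen : (v ++ [y] ++ [x]).length - 1 = (v ++ [y]).length - 1 + 1 := by simp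
    rw [maj, hlen, Finset.sum_range_succ, maj]
    congr 1
    · refine Finset.sum_congr rfl fun i hi => ?_
      rw [Finset.mem_range] at hi
      rw [List.getD_append (v ++ [y]) [x] 0 i (by omega),
        List.getD_append (v ++ [y]) [x] 0 (i + 1) (by omega)]
    · simp

theorem countP_eq_sum_range (P : ℕ → Bool) (t : List ℕ) :
    t.countP P = ∑ j ∈ range t.length, if P (t.getD j 0) then 1 else 0 := by
  induction t with
  | nil => rfl
  | cons a t ih =>
    rw [List.countP_cons, List.length_cons, Finset.sum_range_succ', ih]
    simp only [List.getD_cons_succ, List.getD_cons_zero, add_comm]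

theorem inv_eq_sum (w : List ℕ) : inv w = ∑ i ∈ range w.length, ∑ j ∈ range w.length,
    if i < j ∧ w.getD j 0 < w.getD i 0 then 1 else 0 := by
  induction w with
  | nil => rfl
  | cons a t ih =>
    rw [inv, ih, countP_eq_sum_range, List.length_cons, Finset.sum_range_succ' _ t.length]
    simp only [Finset.sum_range_succ' _ t.length, List.getD_cons_succ, List.getD_cons_zero,
      add_lt_add_iff_right, Nat.not_lt_zero, false_and, if_false, add_zero,
      Nat.zero_lt_succ, true_and, lt_self_iff_false, decide_eq_true_eq]
    ring

section FlattenMap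

variable {f : List ℕ → List ℕ}

theorem flatten_map_perm (hf : ∀ B, (f B).Perm B) (Bs : List (List ℕ)) :
    (Bs.map f).flatten.Perm Bs.flatten := by
  induction Bs with
  | nil => rfl
  | cons B R ih => exact (hf B).append ih

theorem inv_flatten_map_add {c d : List ℕ → ℕ} (hf : ∀ B, (f B).Perm B)
    {Bs : List (List ℕ)} (h : ∀ B ∈ Bs, inv (f B) + c B = inv B + d B) :
    inv (Bs.map f).flatten + (Bs.map c).sum = inv Bs.flatten + (Bs.map d).sum := by
  induction Bs with
  | nil => rfl
  | cons B R ih =>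
    have hB := h B List.mem_cons_self
    have hR := ih fun B hB => h B (List.mem_cons_of_mem _ hB)
    simp only [List.map_cons, List.flatten_cons, List.sum_cons, inv_append,
      crossInv_congr (hf B) (flatten_map_perm hf R)]
    omega

theorem pair_sublist_flatten_map {a b : ℕ} (hf : ∀ B, (f B).Perm B) {Bs : List (List ℕ)}
    (hBs : ∀ B ∈ Bs, [a, b] <+ B → [a, b] <+ f B) (h : [a, b] <+ Bs.flatten) :
    [a, b] <+ (Bs.map f).flatten := by
  induction Bs with
  | nil => simp at h
  | cons B R ih =>
    simp only [List.map_cons, List.flatten_cons, pair_sublist_append_iff] at h ⊢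
    rcases h with h | ⟨ha, hb⟩ | h
    · exact Or.inl (hBs B List.mem_cons_self h)
    · exact Or.inr (Or.inl ⟨(hf B).mem_iff.mpr ha, (flatten_map_perm hf R).mem_iff.mpr hb⟩)
    · exact Or.inr (Or.inr (ih (fun B hB => hBs B (List.mem_cons_of_mem _ hB)) h))

end FlattenMap

section Blocks

variable {p : ℕ → Bool}

def blocks (p : ℕ → Bool) : List ℕ → List (List ℕ)
  | [] => []
  | a :: t =>
    if p a then [a] :: blocks p t
    else
      match blocks p t with
      | [] => [[a]]
      | B :: R => (a :: B) :: R

def IsBlock (p : ℕ → Bool) (B : List ℕ) : Prop :=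
  ∃ s e, B = s ++ [e] ∧ (∀ a ∈ s, p a = false) ∧ p e = true

theorem blocks_cons_of_pos {a : ℕ} (t : List ℕ) (ha : p a = true) :
    blocks p (a :: t) = [a] :: blocks p t := by
  rw [blocks, if_pos ha]

theorem blocks_cons_of_neg {a : ℕ} {t B : List ℕ} {R : List (List ℕ)} (ha : p a = false)
    (ht : blocks p t = B :: R) : blocks p (a :: t) = (a :: B) :: R := by
  rw [blocks, if_neg (by simp [ha]), ht]

theorem flatten_blocks (p : ℕ → Bool) (u : List ℕ) : (blocks p u).flatten = u := by
  induction u with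
  | nil => rfl
  | cons a t ih =>
    unfold blocks
    split
    · simp [ih]
    · split <;> simp_all

theorem blocks_eq_nil_iff {u : List ℕ} : blocks p u = [] ↔ u = [] := by
  refine ⟨fun h => ?_, fun h => h ▸ rfl⟩
  simpa [h] using (flatten_blocks p u).symm

theorem IsBlock.cons {a : ℕ} {B : List ℕ} (hB : IsBlock p B) (ha : p a = false) :
    IsBlock p (a :: B) := by
  obtain ⟨s, e, rfl, hs, he⟩ := hB
  exact ⟨a :: s, e, rfl, by simpa [ha] using hs, he⟩

theorem isBlock_of_mem_blocks {u B : List ℕ} (hu : p (u.getLastD 0) = true)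
    (hB : B ∈ blocks p u) : IsBlock p B := by
  induction u generalizing B with
  | nil => simp [blocks] at hB
  | cons a t ih =>
    rcases eq_or_ne t [] with rfl | ht
    · simp only [List.getLastD_cons, List.getLastD_nil] at hu
      rw [blocks_cons_of_pos _ hu] at hB
      obtain rfl : B = [a] := by simpa [blocks] using hB
      exact ⟨[], a, by simp, by simp, hu⟩
    · have ht' : p (t.getLastD 0) = true := by
        simpa [List.getLast?_cons, List.getLast?_eq_some_getLast ht] using hu
      cases ha : p a with
      | true =>
        rw [blocks_cons_of_pos t ha, List.mem_cons] at hB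
        rcases hB with rfl | hB
        · exact ⟨[], a, by simp, by simp, ha⟩
        · exact ih ht' hB
      | false =>
        obtain ⟨B', R, hBR⟩ := List.exists_cons_of_ne_nil (mt blocks_eq_nil_iff.mp ht)
        rw [blocks_cons_of_neg ha hBR, List.mem_cons] at hB
        rcases hB with rfl | hB
        · exact (ih ht' (hBR ▸ List.mem_cons_self)).cons ha
        · exact ih ht' (hBR ▸ List.mem_cons_of_mem _ hB)

theorem blocks_flatten {Bs : List (List ℕ)} (h : ∀ B ∈ Bs, IsBlock p B) :
    blocks p Bs.flatten = Bs := by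
  induction Bs with
  | nil => rfl
  | cons B R ih =>
    obtain ⟨s, e, rfl, hs, he⟩ := h B List.mem_cons_self
    have hprefix : ∀ s : List ℕ, (∀ a ∈ s, p a = false) →
        blocks p (s ++ e :: R.flatten) = (s ++ [e]) :: blocks p R.flatten := by
      intro s hs
      induction s with
      | nil => exact blocks_cons_of_pos _ he
      | cons a s ihs =>
        simp only [List.mem_cons, forall_eq_or_imp] at hs
        exact blocks_cons_of_neg hs.1 (ihs hs.2)
    rw [List.flatten_cons, List.append_assoc, List.singleton_append, hprefix s hs,
      ih fun B hB => h B (List.mem_cons_of_mem _ hB)]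

def cycle (B : List ℕ) : List ℕ := B.rotate (B.length - 1)

theorem cycle_perm (B : List ℕ) : (cycle B).Perm B := List.rotate_perm _ _

theorem cycle_append_singleton (s : List ℕ) (e : ℕ) : cycle (s ++ [e]) = e :: s := by
  simp [cycle, List.rotate_append_length_eq]

theorem IsBlock.pair_sublist_cycle {a b : ℕ} {B : List ℕ} (hB : IsBlock p B) (hab : p a = p b)
    (h : [a, b] <+ B) : [a, b] <+ cycle B := by
  obtain ⟨s, e, rfl, hs, he⟩ := hB
  rw [cycle_append_singleton]
  rcases pair_sublist_append_iff.mp h with h | ⟨ha, hb⟩ | h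
  · exact h.cons e
  · rw [List.mem_singleton] at hb
    simp [hs a ha, hb, he] at hab
  · simpa using h.length_le

def cycleBlocks (p : ℕ → Bool) (u : List ℕ) : List ℕ := ((blocks p u).map cycle).flatten

theorem cycleBlocks_perm (p : ℕ → Bool) (u : List ℕ) : (cycleBlocks p u).Perm u := by
  simpa [cycleBlocks, flatten_blocks] using flatten_map_perm cycle_perm (blocks p u)

theorem pair_sublist_cycleBlocks {u : List ℕ} (hu : p (u.getLastD 0) = true) {a b : ℕ}
    (hab : p a = p b) (h : [a, b] <+ u) : [a, b] <+ cycleBlocks p u :=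
  pair_sublist_flatten_map cycle_perm
    (fun _ hB => (isBlock_of_mem_blocks hu hB).pair_sublist_cycle hab)
    ((flatten_blocks p u).symm ▸ h)

theorem cycle_reverse_cycle_reverse (B : List ℕ) : (cycle (cycle B).reverse).reverse = B := by
  rcases B.eq_nil_or_concat' with rfl | ⟨s, e, rfl⟩
  · rfl
  · rw [cycle_append_singleton, List.reverse_cons, cycle_append_singleton]
    simp

theorem head?_cycleBlocks {u : List ℕ} (hu : p (u.getLastD 0) = true) :
    ∀ a ∈ (cycleBlocks p u).head?, p a = true := by
  intro a ha
  cases hBs : blocks p u with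
  | nil => simp [cycleBlocks, hBs] at ha
  | cons B R =>
    obtain ⟨s, e, rfl, -, he⟩ := isBlock_of_mem_blocks hu (hBs ▸ List.mem_cons_self)
    simp only [cycleBlocks, hBs, List.map_cons, List.flatten_cons, cycle_append_singleton,
      List.cons_append, List.head?_cons, Option.mem_def, Option.some.injEq] at ha
    exact ha ▸ he

theorem reverse_cycleBlocks_reverse_cycleBlocks {u : List ℕ} (hu : p (u.getLastD 0) = true) :
    (cycleBlocks p (cycleBlocks p u).reverse).reverse = u := by
  have hC : ∀ C ∈ ((blocks p u).map fun B => (cycle B).reverse).reverse, IsBlock p C := by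
    intro C hC
    simp only [List.mem_reverse, List.mem_map] at hC
    obtain ⟨B, hB, rfl⟩ := hC
    obtain ⟨s, e, rfl, hs, he⟩ := isBlock_of_mem_blocks hu hB
    exact ⟨s.reverse, e, by simp [cycle_append_singleton], by simpa using hs, he⟩
  have hrev : (cycleBlocks p u).reverse
      = (((blocks p u).map fun B => (cycle B).reverse).reverse).flatten := by
    simp [cycleBlocks, List.reverse_flatten, List.map_map, Function.comp_def]
  rw [hrev, cycleBlocks, blocks_flatten hC, List.reverse_flatten]
  simp only [List.map_reverse, List.map_map, List.reverse_reverse, Function.comp_def,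
    cycle_reverse_cycle_reverse, List.map_id', flatten_blocks]

end Blocks

def gamma (x : ℕ) (u : List ℕ) : List ℕ :=
  if u.getLastD 0 ≤ x then cycleBlocks (fun a => decide (a ≤ x)) u
  else cycleBlocks (fun a => decide (x < a)) u

theorem gamma_perm (x : ℕ) (u : List ℕ) : (gamma x u).Perm u := by
  unfold gamma
  split_ifs
  exacts [cycleBlocks_perm _ u, cycleBlocks_perm _ u]

theorem pair_sublist_gamma {x a b : ℕ} {u : List ℕ} (hab : a ≤ x ↔ b ≤ x) (h : [a, b] <+ u) :
    [a, b] <+ gamma x u := by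
  unfold gamma
  split_ifs with hu
  · exact pair_sublist_cycleBlocks (by simpa using hu) (by simpa using hab) h
  · exact pair_sublist_cycleBlocks (by simpa using hu) (by simpa [not_le] using not_congr hab) h

theorem gamma_injective (x : ℕ) : Function.Injective (gamma x) := by
  have same : ∀ {P : ℕ → Bool} {u v : List ℕ}, P (u.getLastD 0) = true →
      P (v.getLastD 0) = true → cycleBlocks P u = cycleBlocks P v → u = v := fun hu hv h => by
    rw [← reverse_cycleBlocks_reverse_cycleBlocks hu, h, reverse_cycleBlocks_reverse_cycleBlocks hv]
  -- `gamma x u` starts with a letter on the same side of `x` as the last letter of `u`.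
  have mixed : ∀ {u v : List ℕ}, u.getLastD 0 ≤ x → x < v.getLastD 0 →
      cycleBlocks (fun a => decide (a ≤ x)) u ≠ cycleBlocks (fun a => decide (x < a)) v := by
    intro u v hu hv h
    have hv₀ : cycleBlocks (fun a => decide (x < a)) v ≠ [] := by
      intro h₀
      have hperm := cycleBlocks_perm (fun a => decide (x < a)) v
      rw [h₀] at hperm
      simp [hperm.symm.eq_nil] at hv
    obtain ⟨a, ha⟩ := Option.ne_none_iff_exists'.mp (mt List.head?_eq_none_iff.mp hv₀)
    have hlt := head?_cycleBlocks (p := fun a => decide (x < a)) (by simpa using hv) a ha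
    have hle := head?_cycleBlocks (p := fun a => decide (a ≤ x)) (by simpa using hu) a (h ▸ ha)
    simp only [decide_eq_true_eq] at hlt hle
    omega
  intro u v h
  unfold gamma at h
  split_ifs at h with hu hv hv
  · exact same (by simpa using hu) (by simpa using hv) h
  · exact absurd h (mixed hu (not_le.mp hv))
  · exact absurd h.symm (mixed hv (not_le.mp hu))
  · exact same (by simpa using hu) (by simpa using hv) h

theorem inv_gamma_of_le {x : ℕ} {u : List ℕ} (hu : u.getLastD 0 ≤ x) :
    inv (gamma x u) + u.countP (x < ·) = inv u := by
  have h := inv_flatten_map_add (c := (·.countP (x < ·))) (d := fun _ => 0) cycle_perm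
    (Bs := blocks (fun a => decide (a ≤ x)) u) fun B hB => by
      obtain ⟨s, e, rfl, hs, he⟩ := isBlock_of_mem_blocks (by simpa using hu) hB
      simp only [decide_eq_false_iff_not, not_le, decide_eq_true_eq] at hs he
      rw [cycle_append_singleton, List.countP_append, List.countP_eq_length.mpr (by simpa using hs),
        ← inv_cons_add_length fun a ha => he.trans_lt (hs a ha)]
      simp [he]
  rw [← List.countP_flatten, flatten_blocks] at h
  rw [gamma, if_pos hu]
  simpa [cycleBlocks] using h

theorem inv_gamma_of_lt {x : ℕ} {u : List ℕ} (hu : x < u.getLastD 0) :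
    inv (gamma x u) = inv u + u.countP (· ≤ x) := by
  have h := inv_flatten_map_add (c := fun _ => 0) (d := (·.countP (· ≤ x))) cycle_perm
    (Bs := blocks (fun a => decide (x < a)) u) fun B hB => by
      obtain ⟨s, e, rfl, hs, he⟩ := isBlock_of_mem_blocks (by simpa using hu) hB
      simp only [decide_eq_false_iff_not, not_lt, decide_eq_true_eq] at hs he
      rw [cycle_append_singleton, List.countP_append, List.countP_eq_length.mpr (by simpa using hs),
        inv_cons_eq_add_length fun a ha => (hs a ha).trans_lt he]
      simp [he]
  rw [← List.countP_flatten, flatten_blocks] at h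
  rw [gamma, if_neg (not_le.mpr hu)]
  simpa [cycleBlocks] using h

def phi (w : List ℕ) : List ℕ := w.foldl (fun u x => gamma x u ++ [x]) []

theorem phi_append_singleton (w : List ℕ) (x : ℕ) : phi (w ++ [x]) = gamma x (phi w) ++ [x] := by
  simp [phi]

theorem phi_perm (w : List ℕ) : (phi w).Perm w := by
  induction w using List.reverseRecOn with
  | nil => rfl
  | append_singleton w x ih =>
    rw [phi_append_singleton]
    exact ((gamma_perm x _).trans ih).append_right [x]

theorem getLastD_phi (w : List ℕ) : (phi w).getLastD 0 = w.getLastD 0 := by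
  induction w using List.reverseRecOn with
  | nil => rfl
  | append_singleton w x ih => simp [phi_append_singleton]

theorem inv_phi (w : List ℕ) : inv (phi w) = maj w := by
  induction w using List.reverseRecOn with
  | nil => rfl
  | append_singleton w x ih =>
    rw [phi_append_singleton, inv_append, crossInv_singleton, (gamma_perm x _).countP_eq,
      maj_append_singleton, ← ih, ← getLastD_phi, ← (phi_perm w).length_eq]
    have hsplit : (phi w).length = (phi w).countP (· ≤ x) + (phi w).countP (x < ·) := by
      rw [List.length_eq_countP_add_countP (· ≤ x)]
      exact congrArg _ (List.countP_congr (by simp))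
    simp only [inv, List.countP_nil, add_zero]
    split_ifs with h
    · rw [inv_gamma_of_lt h]
      omega
    · rw [inv_gamma_of_le (not_lt.mp h), add_zero]

theorem phi_injective : Function.Injective phi := by
  intro w v h
  induction w using List.reverseRecOn generalizing v with
  | nil => exact ((phi_perm v).symm.trans (h ▸ phi_perm [])).eq_nil.symm
  | append_singleton w x ih =>
    rcases v.eq_nil_or_concat' with rfl | ⟨v, y, rfl⟩
    · have hlen := (phi_perm (w ++ [x])).length_eq
      rw [h] at hlen
      simp [phi] at hlen
    · rw [phi_append_singleton, phi_append_singleton] at h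
      obtain ⟨h₁, h₂⟩ := List.append_inj' h rfl
      obtain rfl : x = y := by simpa using h₂
      rw [ih (gamma_injective x h₁)]

theorem pair_sublist_phi {a b : ℕ} (hab : ∀ x, x ≠ a → x ≠ b → (a ≤ x ↔ b ≤ x)) {w : List ℕ}
    (hw : w.Nodup) (h : [a, b] <+ w) : [a, b] <+ phi w := by
  induction w using List.reverseRecOn with
  | nil => simp at h
  | append_singleton w x ih =>
    have hxw : x ∉ w := fun hx => by simpa using (List.nodup_append.mp hw).2.2 x hx
    rw [phi_append_singleton]
    rcases pair_sublist_append_iff.mp h with h | ⟨ha, hb⟩ | h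
    · have hxa : x ≠ a := fun hxa => hxw (hxa ▸ h.subset (by simp))
      have hxb : x ≠ b := fun hxb => hxw (hxb ▸ h.subset (by simp))
      exact (pair_sublist_gamma (hab x hxa hxb) (ih hw.of_append_left h)).trans
        (List.sublist_append_left _ _)
    · refine pair_sublist_append_iff.mpr (Or.inr (Or.inl ⟨?_, hb⟩))
      exact (gamma_perm x _).mem_iff.mpr ((phi_perm w).mem_iff.mpr ha)
    · simpa using h.length_le

theorem idxOf_phi_lt_iff {w : List ℕ} (hw : w.Nodup) {a b : ℕ} (ha : a ∈ w) (hb : b ∈ w)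
    (hab : ∀ x, x ≠ a → x ≠ b → (a ≤ x ↔ b ≤ x)) :
    (phi w).idxOf a < (phi w).idxOf b ↔ w.idxOf a < w.idxOf b := by
  have hw' : (phi w).Nodup := (phi_perm w).nodup_iff.mpr hw
  have mem : ∀ {c}, c ∈ w → c ∈ phi w := (phi_perm w).mem_iff.mpr
  have preserve : ∀ {c d}, c ∈ w → d ∈ w → (∀ x, x ≠ c → x ≠ d → (c ≤ x ↔ d ≤ x)) →
      w.idxOf c < w.idxOf d → (phi w).idxOf c < (phi w).idxOf d := fun hc hd hcd h =>
    (pair_sublist_iff_idxOf_lt hw' (mem hc) (mem hd)).mp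
      (pair_sublist_phi hcd hw ((pair_sublist_iff_idxOf_lt hw hc hd).mpr h))
  refine ⟨fun h => ?_, preserve ha hb hab⟩
  by_contra h'
  rcases (not_lt.mp h').lt_or_eq with hlt | heq
  · have := preserve hb ha (fun x hxb hxa => (hab x hxa hxb).symm) hlt
    omega
  · rw [List.idxOf_inj hb] at heq
    subst heq
    exact lt_irrefl _ h

section Permutations

variable {n : ℕ}

def word (σ : Equiv.Perm (Fin n)) : List ℕ := List.ofFn fun i => (σ i : ℕ)

theorem length_word (σ : Equiv.Perm (Fin n)) : (word σ).length = n := by simp [word]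

theorem getD_word (σ : Equiv.Perm (Fin n)) (i : ℕ) : (word σ).getD i 0 = pv n σ i := by
  by_cases h : i < n <;> simp [word, pv, h]

theorem mem_word {σ : Equiv.Perm (Fin n)} {a : ℕ} : a ∈ word σ ↔ a < n := by
  simp only [word, List.mem_ofFn]
  exact ⟨by rintro ⟨i, rfl⟩; exact (σ i).isLt, fun h => ⟨σ⁻¹ ⟨a, h⟩, by simp⟩⟩

theorem nodup_word (σ : Equiv.Perm (Fin n)) : (word σ).Nodup :=
  List.nodup_ofFn.mpr fun _ _ h => σ.injective (Fin.ext h)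

theorem word_injective : Function.Injective (word (n := n)) := by
  intro σ τ h
  ext i
  simpa [word] using congrArg (·.getD i 0) h

theorem invNum_eq_inv_word (σ : Equiv.Perm (Fin n)) : invNum n σ = inv (word σ) := by
  rw [invNum, Finset.card_filter, Finset.sum_product, inv_eq_sum, length_word]
  simp only [getD_word]

theorem majNum_eq_maj_word (σ : Equiv.Perm (Fin n)) : majNum n σ = maj (word σ) := by
  rw [majNum, desSet, Finset.sum_filter, maj, length_word]
  simp only [getD_word]

theorem pv_lt (σ : Equiv.Perm (Fin n)) {i : ℕ} (h : i < n) : pv n σ i < n := by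
  simp [pv, h]

theorem pv_inv_pv (σ : Equiv.Perm (Fin n)) {i : ℕ} (h : i < n) : pv n σ⁻¹ (pv n σ i) = i := by
  simp [pv, h]

theorem invNum_inv (σ : Equiv.Perm (Fin n)) : invNum n σ⁻¹ = invNum n σ := by
  unfold invNum
  have hσ : ∀ {i}, i < n → pv n σ⁻¹ (pv n σ i) = i := pv_inv_pv σ
  have hσ' : ∀ {i}, i < n → pv n σ (pv n σ⁻¹ i) = i := fun h => by
    simpa using pv_inv_pv σ⁻¹ h
  refine Finset.card_nbij' (fun p => (pv n σ⁻¹ p.2, pv n σ⁻¹ p.1))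
    (fun p => (pv n σ p.2, pv n σ p.1)) ?_ ?_ ?_ ?_
  all_goals
    intro p hp
    simp only [Finset.coe_filter, Finset.mem_product, Finset.mem_range,
      Set.mem_ofPred_eq] at hp ⊢
  · rw [hσ' hp.1.1, hσ' hp.1.2]
    exact ⟨⟨pv_lt _ hp.1.2, pv_lt _ hp.1.1⟩, hp.2.2, hp.2.1⟩
  · rw [hσ hp.1.1, hσ hp.1.2]
    exact ⟨⟨pv_lt _ hp.1.2, pv_lt _ hp.1.1⟩, hp.2.2, hp.2.1⟩
  · rw [hσ' hp.1.1, hσ' hp.1.2]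
  · rw [hσ hp.1.1, hσ hp.1.2]

theorem idxOf_word (σ : Equiv.Perm (Fin n)) {a : ℕ} (ha : a < n) :
    (word σ).idxOf a = pv n σ⁻¹ a := by
  have hi : pv n σ⁻¹ a < (word σ).length := (length_word σ).symm ▸ pv_lt σ⁻¹ ha
  have hget : (word σ)[pv n σ⁻¹ a] = a := by
    rw [← List.getD_eq_getElem _ 0 hi, getD_word]
    simpa using pv_inv_pv σ⁻¹ ha
  rw [← (nodup_word σ).idxOf_getElem _ hi, hget]

theorem mem_desSet_inv_iff (σ : Equiv.Perm (Fin n)) (i : ℕ) :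
    i ∈ desSet n σ⁻¹ ↔ i + 1 < n ∧ (word σ).idxOf (i + 1) < (word σ).idxOf i := by
  have key : i + 1 < n →
      (pv n σ⁻¹ (i + 1) < pv n σ⁻¹ i ↔ (word σ).idxOf (i + 1) < (word σ).idxOf i) :=
    fun h => by rw [idxOf_word σ h, idxOf_word σ (by omega)]
  simp only [desSet, Finset.mem_filter, Finset.mem_range]
  exact ⟨fun ⟨h, hlt⟩ => ⟨by omega, (key (by omega)).mp hlt⟩,
    fun ⟨h, hlt⟩ => ⟨by omega, (key h).mpr hlt⟩⟩

theorem exists_word_eq {τ : Equiv.Perm (Fin n)} {l : List ℕ} (hl : l.Perm (word τ)) :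
    ∃ σ : Equiv.Perm (Fin n), word σ = l := by
  have hlen : l.length = n := hl.length_eq.trans (length_word τ)
  have hnodup : l.Nodup := hl.nodup_iff.mpr (nodup_word τ)
  let f : Fin n → Fin n := fun i =>
    ⟨l[i.1], mem_word.mp (hl.mem_iff.mp (List.getElem_mem _))⟩
  have hf : Function.Injective f := fun i j h =>
    Fin.ext ((hnodup.getElem_inj_iff).mp (congrArg Fin.val h))
  refine ⟨Equiv.ofBijective f (Finite.injective_iff_bijective.mp hf), ?_⟩
  apply List.ext_getElem (by rw [length_word, hlen])
  intro i _ _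
  simp [word, f]

def foata (τ : Equiv.Perm (Fin n)) : Equiv.Perm (Fin n) :=
  (exists_word_eq (phi_perm (word τ))).choose

theorem word_foata (τ : Equiv.Perm (Fin n)) : word (foata τ) = phi (word τ) :=
  (exists_word_eq (phi_perm (word τ))).choose_spec

theorem foata_bijective : Function.Bijective (foata (n := n)) :=
  Finite.injective_iff_bijective.mp fun σ τ h =>
    word_injective (phi_injective (by rw [← word_foata, ← word_foata, h]))

theorem invNum_foata (τ : Equiv.Perm (Fin n)) : invNum n (foata τ) = majNum n τ := by
  rw [invNum_eq_inv_word, word_foata, inv_phi, majNum_eq_maj_word]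

theorem desSet_inv_foata (τ : Equiv.Perm (Fin n)) : desSet n (foata τ)⁻¹ = desSet n τ⁻¹ := by
  ext i
  rw [mem_desSet_inv_iff, mem_desSet_inv_iff, word_foata, and_congr_right_iff]
  intro hi
  exact idxOf_phi_lt_iff (nodup_word τ) (mem_word.mpr hi) (mem_word.mpr (by omega))
    (fun x _ _ => by omega)

end Permutations

end Foata

open Foata in
theorem inv_maj_inverse_equidistributed_on_descent_classes (n : ℕ) (J : Finset ℕ) :
    (∑ σ ∈ Finset.univ.filter (fun σ : Equiv.Perm (Fin n) => desSet n σ = J),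
      (Polynomial.X : Polynomial ℤ) ^ invNum n σ) =
    ∑ σ ∈ Finset.univ.filter (fun σ : Equiv.Perm (Fin n) => desSet n σ = J),
      (Polynomial.X : Polynomial ℤ) ^ majNum n σ⁻¹ := by
  let e : Equiv.Perm (Fin n) ≃ Equiv.Perm (Fin n) :=
    (Equiv.inv _).trans ((Equiv.ofBijective _ foata_bijective).trans (Equiv.inv _))
  have he : ∀ σ, e σ = (foata σ⁻¹)⁻¹ := fun _ => rfl
  refine (Finset.sum_equiv e (fun σ => ?_) (fun σ _ => ?_)).symm
  · simp only [Finset.mem_filter, Finset.mem_univ, true_and, he]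
    rw [desSet_inv_foata, inv_inv]
  · rw [he, invNum_inv, invNum_foata]
end
end

section
/- The derangement polynomial D_n(t) = Σ_{σ ∈ D_n} t^{exc(σ)} is palindromic of degree n (with center of symmetry n/2) and unimodal for every n ≥ 2. -/
/-!
Inverting a derangement exchanges excedances `i < σ i` and anti-excedances `σ i < i`, so the
number `d n k` of derangements of `Fin n` with `k` excedances satisfies `d n k = d n (n - k)`.

Every derangement of `Fin (n + 2)` arises exactly once by inserting the new smallest point `0`
into the cycles of a permutation `τ` of `Fin (n + 1)`, right after some point `p`, where either
`τ` is a derangement or `p` is its only fixed point. Inserting after `p` keeps the number of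
excedances if `p < τ p` and raises it by one otherwise, which gives
`d (n+2) (k+1) = (k+1) d (n+1) (k+1) + (n+1-k) d (n+1) k + (n+1) d n k`.
All coefficients are nonnegative, so by induction on `n` the sequence `d n` increases up to the
middle; symmetry then gives the decreasing half.
-/

open Finset Polynomial

open scoped Classical

noncomputable section

/-- The derangement polynomial `D_n(t) = ∑ t^{exc σ}` over fixed-point-free `σ ∈ S_n`. -/
def derangePoly (n : ℕ) : Polynomial ℤ :=
  ∑ σ ∈ Finset.univ.filter (fun σ : Equiv.Perm (Fin n) => ∀ i, σ i ≠ i),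
    X ^ excNum n σ


open Equiv

section Derangements

variable {α β : Type*}

theorem inv_mem_derangements_iff {σ : Perm α} : σ⁻¹ ∈ derangements α ↔ σ ∈ derangements α :=
  forall_congr' fun x => by rw [Ne, Perm.inv_eq_iff_eq, eq_comm]

theorem permCongr_mem_derangements_iff (e : α ≃ β) {σ : Perm α} :
    e.permCongr σ ∈ derangements β ↔ σ ∈ derangements α :=
  (e.forall_congr fun x => by simp [permCongr_apply]).symm

end Derangements

section LinearOrder

variable {α β : Type*} [Fintype α] [LinearOrder α] [Fintype β] [LinearOrder β]

namespace Equiv.Perm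

def exc (σ : Perm α) : ℕ := #{x | x < σ x}

theorem exc_le_card (σ : Perm α) : σ.exc ≤ Fintype.card α :=
  card_filter_le _ _

theorem exc_inv (σ : Perm α) : σ⁻¹.exc = #{x | σ x < x} :=
  card_equiv σ.symm fun x => by simp

theorem exc_add_exc_inv {σ : Perm α} (hσ : σ ∈ derangements α) :
    σ.exc + σ⁻¹.exc = Fintype.card α := by
  rw [exc_inv, exc, ← card_union_of_disjoint (disjoint_filter.2 fun x _ h => lt_asymm h),
    ← filter_or, filter_true_of_mem fun x _ => (hσ x).symm.lt_or_gt, card_univ]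

theorem exc_pos [Nonempty α] {σ : Perm α} (hσ : σ ∈ derangements α) : 0 < σ.exc := by
  set x₀ := (univ : Finset α).min' univ_nonempty
  refine card_pos.2 ⟨x₀, mem_filter.2 ⟨mem_univ _, ?_⟩⟩
  exact (min'_le _ _ (mem_univ _)).lt_of_ne (hσ x₀).symm

theorem exc_permCongr (e : α ≃o β) (σ : Perm α) : (e.toEquiv.permCongr σ).exc = σ.exc :=
  card_equiv e.toEquiv.symm fun x => by
    rw [mem_filter, mem_filter, ← e.lt_iff_lt]
    simp [permCongr_apply]

theorem exc_ofSubtype {p : α → Prop} [DecidablePred p] (σ : Perm (Subtype p)) :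
    (ofSubtype σ).exc = σ.exc := by
  rw [exc, exc, ← card_map (Function.Embedding.subtype p)]
  congr 1
  ext x
  by_cases hx : p x
  · simp [ofSubtype_apply_of_mem σ hx, hx, ← Subtype.coe_lt_coe]
  · simp [ofSubtype_apply_of_not_mem σ hx, hx]

end Equiv.Perm

def numDerangementsExc (α : Type*) [Fintype α] [LinearOrder α] (k : ℕ) : ℕ :=
  #{σ : Perm α | σ ∈ derangements α ∧ σ.exc = k}

theorem numDerangementsExc_congr (e : α ≃o β) (k : ℕ) :
    numDerangementsExc α k = numDerangementsExc β k :=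
  card_equiv e.toEquiv.permCongr fun σ => by
    simp only [mem_filter, mem_univ, true_and, Perm.exc_permCongr,
      permCongr_mem_derangements_iff]

theorem numDerangementsExc_symm {k : ℕ} (hk : k ≤ Fintype.card α) :
    numDerangementsExc α k = numDerangementsExc α (Fintype.card α - k) := by
  refine card_equiv (Equiv.inv (Perm α)) fun σ => ?_
  simp only [mem_filter, mem_univ, true_and, Equiv.inv_apply, inv_mem_derangements_iff]
  refine and_congr_right fun hσ => ?_
  have := σ.exc_add_exc_inv hσ
  omega

theorem numDerangementsExc_zero [Nonempty α] : numDerangementsExc α 0 = 0 :=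
  card_eq_zero.2 <| filter_eq_empty_iff.2 fun _ _ ⟨hσ, h⟩ => (Perm.exc_pos hσ).ne' h

theorem numDerangementsExc_eq_zero_of_card_lt {k : ℕ} (hk : Fintype.card α < k) :
    numDerangementsExc α k = 0 :=
  card_eq_zero.2 <| filter_eq_empty_iff.2 fun σ _ ⟨_, h⟩ => (h ▸ σ.exc_le_card).not_gt hk

theorem card_fixedPoints_eq_singleton_exc (a : α) (k : ℕ) :
    #{τ : Perm α | (∀ x, τ x = x ↔ x = a) ∧ τ.exc = k} =
      numDerangementsExc {x // x ≠ a} k := by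
  symm
  refine card_bij (fun ρ _ => Perm.ofSubtype ρ) ?_ (fun _ _ _ _ h => Perm.ofSubtype_injective h) ?_
  · simp only [mem_filter, mem_univ, true_and, Perm.exc_ofSubtype]
    rintro ρ ⟨hρ, rfl⟩
    refine ⟨fun x => ?_, rfl⟩
    by_cases hx : x = a
    · simp [hx, Perm.ofSubtype_apply_of_not_mem]
    · simpa [hx, Perm.ofSubtype_apply_of_mem ρ hx, Subtype.ext_iff] using hρ ⟨x, hx⟩
  · simp only [mem_filter, mem_univ, true_and]
    rintro τ ⟨hτ, rfl⟩
    have hmaps : ∀ x, τ x ≠ a ↔ x ≠ a := fun x => not_congr <| by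
      conv_lhs => rw [← (hτ a).2 rfl]
      exact τ.injective.eq_iff
    have hback : Perm.ofSubtype (τ.subtypePerm hmaps) = τ :=
      Perm.ofSubtype_subtypePerm _ fun x hx => mt (hτ x).2 (by simpa using hx)
    refine ⟨τ.subtypePerm hmaps, ⟨fun x hx => x.2 ((hτ x).1 ?_), ?_⟩, hback⟩
    · simpa [Subtype.ext_iff] using hx
    · rw [← Perm.exc_ofSubtype, hback]

end LinearOrder

section Insertion

variable {n : ℕ}

/-- In cycle notation, `insertZeroAfter τ p` is `τ` with every point shifted up by one and the
new point `0` inserted between `p` and `τ p`; if `p` is a fixed point of `τ`, this creates the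
transposition `(0 p)`. -/
def insertZeroAfter (τ : Perm (Fin (n + 1))) (p : Fin (n + 1)) : Perm (Fin (n + 2)) :=
  Perm.decomposeFin.symm ((τ p).succ, τ)

variable (τ : Perm (Fin (n + 1))) (p : Fin (n + 1))

theorem insertZeroAfter_apply_zero : insertZeroAfter τ p 0 = (τ p).succ :=
  Perm.decomposeFin_symm_apply_zero _ _

theorem insertZeroAfter_apply_succ (i : Fin (n + 1)) :
    insertZeroAfter τ p i.succ = if i = p then 0 else (τ i).succ := by
  rw [insertZeroAfter, Perm.decomposeFin_symm_apply_succ]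
  split_ifs with h
  · rw [h, swap_apply_right]
  · exact swap_apply_of_ne_of_ne (Fin.succ_ne_zero _) (by simpa using τ.injective.ne h)

theorem insertZeroAfter_injective :
    Function.Injective fun x : Fin (n + 1) × Perm (Fin (n + 1)) => insertZeroAfter x.2 x.1 := by
  rintro ⟨p, τ⟩ ⟨p', τ'⟩ h
  obtain ⟨hp, rfl⟩ := Prod.ext_iff.1 (Perm.decomposeFin.symm.injective h)
  simpa using hp

theorem exists_insertZeroAfter_eq {σ : Perm (Fin (n + 2))} (hσ : σ 0 ≠ 0) :
    ∃ x : Fin (n + 1) × Perm (Fin (n + 1)), insertZeroAfter x.2 x.1 = σ := by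
  have h0 : (Perm.decomposeFin σ).1 = σ 0 := by
    conv_rhs => rw [← Perm.decomposeFin.symm_apply_apply σ]
    exact (Perm.decomposeFin_symm_apply_zero _ _).symm
  refine ⟨((Perm.decomposeFin σ).2⁻¹ ((σ 0).pred hσ), (Perm.decomposeFin σ).2), ?_⟩
  simp [insertZeroAfter, ← h0]

theorem insertZeroAfter_mem_derangements_iff :
    insertZeroAfter τ p ∈ derangements (Fin (n + 2)) ↔ ∀ i, τ i = i → i = p := by
  rw [derangements, Set.mem_ofPred_eq, Fin.forall_fin_succ, insertZeroAfter_apply_zero]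
  refine (and_iff_right (Fin.succ_ne_zero _)).trans (forall_congr' fun i => ?_)
  rw [insertZeroAfter_apply_succ]
  split_ifs with h
  · simpa [h] using (Fin.succ_ne_zero p).symm
  · simp [h]

theorem exc_insertZeroAfter :
    (insertZeroAfter τ p).exc = τ.exc + if p < τ p then 0 else 1 := by
  have hsplit : ∀ f : Fin (n + 1) → ℕ, ∑ i, f i = f p + ∑ i ∈ univ.erase p, f i :=
    fun f => (add_sum_erase _ f (mem_univ p)).symm
  have hrest : ∑ i ∈ univ.erase p, (if i.succ < insertZeroAfter τ p i.succ then 1 else 0) =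
      ∑ i ∈ univ.erase p, if i < τ i then 1 else 0 := sum_congr rfl fun i hi => by
    rw [insertZeroAfter_apply_succ, if_neg (ne_of_mem_erase hi)]
    simp only [Fin.succ_lt_succ_iff]
  simp only [Perm.exc, card_filter]
  rw [Fin.sum_univ_succ, insertZeroAfter_apply_zero, if_pos (Fin.succ_pos _), hsplit, hsplit,
    insertZeroAfter_apply_succ, if_pos rfl, if_neg (Fin.succ_pos _).not_gt, hrest]
  split_ifs <;> omega

end Insertion

section Recurrence

variable {n : ℕ}

theorem numDerangementsExc_fin_add_two_eq_sum (k : ℕ) :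
    numDerangementsExc (Fin (n + 2)) (k + 1) = ∑ τ : Perm (Fin (n + 1)),
      #{p | insertZeroAfter τ p ∈ derangements _ ∧ (insertZeroAfter τ p).exc = k + 1} := by
  have hprod : ∑ τ : Perm (Fin (n + 1)),
      #{p | insertZeroAfter τ p ∈ derangements _ ∧ (insertZeroAfter τ p).exc = k + 1} =
      #{x : Fin (n + 1) × Perm (Fin (n + 1)) |
        insertZeroAfter x.2 x.1 ∈ derangements _ ∧ (insertZeroAfter x.2 x.1).exc = k + 1} := by
    simp only [card_filter, Fintype.sum_prod_type_right]
  rw [hprod, numDerangementsExc]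
  symm
  refine card_bij (fun x _ => insertZeroAfter x.2 x.1) (fun x hx => by simpa using hx)
    (fun _ _ _ _ h => insertZeroAfter_injective h) ?_
  simp only [mem_filter, mem_univ, true_and]
  rintro σ hσ
  obtain ⟨x, rfl⟩ := exists_insertZeroAfter_eq (hσ.1 0)
  exact ⟨x, hσ, rfl⟩

theorem card_insertZeroAfter_of_mem_derangements {τ : Perm (Fin (n + 1))}
    (hτ : τ ∈ derangements (Fin (n + 1))) (k : ℕ) :
    #{p | insertZeroAfter τ p ∈ derangements _ ∧ (insertZeroAfter τ p).exc = k + 1} =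
      if τ.exc = k + 1 then k + 1 else if τ.exc = k then n + 1 - k else 0 := by
  have hcond : ∀ p, (insertZeroAfter τ p ∈ derangements _ ∧
      (insertZeroAfter τ p).exc = k + 1) ↔ τ.exc + (if p < τ p then 0 else 1) = k + 1 :=
    fun p => by
      rw [insertZeroAfter_mem_derangements_iff, exc_insertZeroAfter]
      exact and_iff_right fun i hi => absurd hi (hτ i)
  rw [filter_congr fun p _ => hcond p]
  split_ifs with h₁ h₂
  · rw [← h₁]
    exact congrArg card (filter_congr fun p _ => by split_ifs <;> simp [*])
  · have hcompl := card_filter_add_card_filter_not (s := univ) fun p => p < τ p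
    rw [card_univ, Fintype.card_fin, ← Perm.exc, h₂] at hcompl
    rw [Nat.sub_eq_of_eq_add' hcompl.symm]
    exact congrArg card (filter_congr fun p _ => by split_ifs <;> simp [*])
  · exact card_eq_zero.2 (filter_eq_empty_iff.2 fun p _ => by split_ifs <;> omega)

theorem card_insertZeroAfter_of_notMem_derangements {τ : Perm (Fin (n + 1))}
    (hτ : τ ∉ derangements (Fin (n + 1))) (k : ℕ) :
    #{p | insertZeroAfter τ p ∈ derangements _ ∧ (insertZeroAfter τ p).exc = k + 1} =
      #{p | (∀ i, τ i = i ↔ i = p) ∧ τ.exc = k} := by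
  obtain ⟨i₀, hi₀⟩ : ∃ i₀, τ i₀ = i₀ := by simpa [derangements] using hτ
  refine congrArg card (filter_congr fun p _ => ?_)
  rw [insertZeroAfter_mem_derangements_iff, exc_insertZeroAfter]
  constructor
  · rintro ⟨hp, hexc⟩
    obtain rfl := hp i₀ hi₀
    refine ⟨fun i => ⟨hp i, fun h => h ▸ hi₀⟩, ?_⟩
    simpa [hi₀] using hexc
  · rintro ⟨hp, hexc⟩
    refine ⟨fun i => (hp i).1, ?_⟩
    simp [(hp p).2 rfl, hexc]

theorem numDerangementsExc_fin_add_two_succ (k : ℕ) :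
    numDerangementsExc (Fin (n + 2)) (k + 1) =
      (k + 1) * numDerangementsExc (Fin (n + 1)) (k + 1) +
        (n + 1 - k) * numDerangementsExc (Fin (n + 1)) k +
          (n + 1) * numDerangementsExc (Fin n) k := by
  have hder : ∑ τ ∈ {τ : Perm (Fin (n + 1)) | τ ∈ derangements _},
      (if τ.exc = k + 1 then k + 1 else if τ.exc = k then n + 1 - k else 0) =
      (k + 1) * numDerangementsExc (Fin (n + 1)) (k + 1) +
        (n + 1 - k) * numDerangementsExc (Fin (n + 1)) k := by
    have hk : #{τ : Perm (Fin (n + 1)) | τ ∈ derangements _ ∧ ¬τ.exc = k + 1 ∧ τ.exc = k} =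
        numDerangementsExc (Fin (n + 1)) k :=
      congrArg card <| filter_congr fun τ _ =>
        and_congr_right fun _ => and_iff_right_of_imp fun h => by omega
    rw [sum_ite, sum_ite, sum_const_zero, add_zero, sum_const, sum_const, filter_filter,
      filter_filter, filter_filter, hk, smul_eq_mul, smul_eq_mul, mul_comm,
      mul_comm (numDerangementsExc _ k)]
    rfl
  have hfix : ∑ τ ∈ {τ : Perm (Fin (n + 1)) | τ ∉ derangements _},
      #{p | (∀ i, τ i = i ↔ i = p) ∧ τ.exc = k} = (n + 1) * numDerangementsExc (Fin n) k := by
    calc _ = ∑ τ : Perm (Fin (n + 1)), #{p | (∀ i, τ i = i ↔ i = p) ∧ τ.exc = k} := by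
          refine sum_filter_of_ne fun τ _ hne hτ => hne ?_
          exact card_eq_zero.2 <| filter_eq_empty_iff.2 fun p _ h => hτ p ((h.1 p).2 rfl)
      _ = ∑ p, #{τ : Perm (Fin (n + 1)) | (∀ i, τ i = i ↔ i = p) ∧ τ.exc = k} := by
          simp only [card_filter]
          exact sum_comm
      _ = ∑ p : Fin (n + 1), numDerangementsExc (Fin n) k := sum_congr rfl fun p _ => by
          rw [numDerangementsExc_congr (finSuccAboveOrderIso p)]
          convert card_fixedPoints_eq_singleton_exc p k
      _ = _ := by simp
  rw [numDerangementsExc_fin_add_two_eq_sum,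
    ← sum_filter_add_sum_filter_not univ (· ∈ derangements _),
    sum_congr rfl fun τ hτ => card_insertZeroAfter_of_mem_derangements (mem_filter.1 hτ).2 k,
    sum_congr rfl fun τ hτ => card_insertZeroAfter_of_notMem_derangements (mem_filter.1 hτ).2 k,
    hder, hfix]

end Recurrence

section Unimodality

theorem numDerangementsExc_fin_symm {n k : ℕ} (hk : k ≤ n) :
    numDerangementsExc (Fin n) k = numDerangementsExc (Fin n) (n - k) := by
  simpa using numDerangementsExc_symm (α := Fin n) (k := k) (by simpa using hk)

theorem numDerangementsExc_fin_le_succ {m k : ℕ} (h : 2 * (k + 1) ≤ m + 1) :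
    numDerangementsExc (Fin m) k ≤ numDerangementsExc (Fin m) (k + 1) := by
  induction m using Nat.strong_induction_on generalizing k with | _ m ih =>
  obtain hmid | hlt : 2 * (k + 1) = m + 1 ∨ 2 * (k + 1) ≤ m := by omega
  · rw [numDerangementsExc_fin_symm (k := k + 1) (by omega), show m - (k + 1) = k by omega]
  obtain _ | k := k
  · have : NeZero m := ⟨by omega⟩
    simp [numDerangementsExc_zero]
  obtain ⟨n, rfl⟩ : ∃ n, m = n + 2 := ⟨m - 2, by omega⟩
  obtain ⟨j, hj⟩ : ∃ j, n = k + j := ⟨n - k, by omega⟩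
  have ha₀ := ih (n + 1) (by omega) (k := k) (by omega)
  have ha₁ := ih (n + 1) (by omega) (k := k + 1) (by omega)
  have hb := ih n (by omega) (k := k) (by omega)
  rw [numDerangementsExc_fin_add_two_succ, numDerangementsExc_fin_add_two_succ,
    show n + 1 - k = j + 1 by omega, show n + 1 - (k + 1) = j by omega]
  linarith [Nat.mul_le_mul_left (k + 2) ha₁, Nat.mul_le_mul_left (j + 1) ha₀,
    Nat.mul_le_mul_left (n + 1) hb]

theorem numDerangementsExc_fin_monotoneOn (n : ℕ) :
    MonotoneOn (numDerangementsExc (Fin n)) (Set.Iic ((n + 1) / 2)) :=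
  monotoneOn_of_le_succ Set.ordConnected_Iic fun k _ _ hk =>
    numDerangementsExc_fin_le_succ (by simp at hk; omega)

theorem numDerangementsExc_fin_antitoneOn (n : ℕ) :
    AntitoneOn (numDerangementsExc (Fin n)) (Set.Ici (n / 2)) := by
  intro i hi j _ hij
  by_cases hj : j ≤ n
  · rw [numDerangementsExc_fin_symm hj, numDerangementsExc_fin_symm (hij.trans hj)]
    simp only [Set.mem_Ici] at hi
    exact numDerangementsExc_fin_monotoneOn n (by simp; omega) (by simp; omega) (by omega)
  · rw [numDerangementsExc_eq_zero_of_card_lt (by simpa using hj)]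
    exact Nat.zero_le _

end Unimodality

theorem excNum_eq_exc {n : ℕ} (σ : Perm (Fin n)) : excNum n σ = σ.exc := by
  rw [excNum, Perm.exc, ← card_map Fin.valEmbedding, ← Nat.Iio_eq_range,
    ← Fin.map_valEmbedding_univ, filter_map]
  congr 2
  ext x
  simp [pv]

theorem coeff_derangePoly (n k : ℕ) : (derangePoly n).coeff k = numDerangementsExc (Fin n) k := by
  simp only [derangePoly, finsetSum_coeff, coeff_X_pow, excNum_eq_exc]
  rw [sum_boole, filter_filter]
  exact congrArg (Nat.cast ∘ card) (filter_congr fun σ _ => and_congr Iff.rfl eq_comm)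

theorem derangement_palindromic_unimodal_general (n : ℕ) :
    (∀ j ≤ n, (derangePoly n).coeff j = (derangePoly n).coeff (n - j)) ∧
    (∀ j, 0 ≤ (derangePoly n).coeff j) ∧
    ∃ c, (∀ i j, i ≤ j → j ≤ c → (derangePoly n).coeff i ≤ (derangePoly n).coeff j) ∧
         (∀ i j, c ≤ i → i ≤ j → (derangePoly n).coeff j ≤ (derangePoly n).coeff i) := by
  simp only [coeff_derangePoly, Nat.cast_le, Nat.cast_inj, Nat.cast_nonneg, implies_true, true_and]
  refine ⟨fun j hj => numDerangementsExc_fin_symm hj, n / 2, fun i j hij hj => ?_,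
    fun i j hi hij => numDerangementsExc_fin_antitoneOn n hi (hi.trans hij) hij⟩
  exact numDerangementsExc_fin_monotoneOn n (by simp; omega) (by simp; omega) hij

theorem derangement_palindromic_unimodal (n : ℕ) (hn : 2 ≤ n) :
    (∀ j ≤ n, (derangePoly n).coeff j = (derangePoly n).coeff (n - j)) ∧
    (∀ j, 0 ≤ (derangePoly n).coeff j) ∧
    ∃ c, (∀ i j, i ≤ j → j ≤ c → (derangePoly n).coeff i ≤ (derangePoly n).coeff j) ∧
         (∀ i j, c ≤ i → i ≤ j → (derangePoly n).coeff j ≤ (derangePoly n).coeff i) :=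
  derangement_palindromic_unimodal_general n
end
end

section
/- For all n ≥ 1, for words w over the positive integers with x_w the monomial of their multiset of letters, and NDD_m the set of words of length m with no double descents: Σ_{w ∈ NDD_n} x_w t^{des(w)} (1+t)^{n-2des(w)} = Σ_{m=0}^{n} h_{n-m}(x) t^{n-m} Σ_{w ∈ NDD_m, w_{m-1} ≤ w_m} x_w t^{des(w)} (1+t)^{m-1-2des(w)}, where the m=0 term is h_n(x)t^n. -/
open Polynomial

open scoped Classical

noncomputable section

/-- Number of descents of a word (as a list of letters in `ℕ`). -/
def listDes (l : List ℕ) : ℕ :=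
  ((List.range (l.length - 1)).filter fun i => l.getD (i + 1) 0 < l.getD i 0).length

/-- The word `l` has no double descents: no `i` with `l_i > l_{i+1} > l_{i+2}`. -/
def ListNDD (l : List ℕ) : Prop :=
  ∀ i, i + 2 < l.length →
    ¬ (l.getD (i + 2) 0 < l.getD (i + 1) 0 ∧ l.getD (i + 1) 0 < l.getD i 0)

/-- The last step of `l` is weakly increasing: `w_{n-1} ≤ w_n` (with `w_0 = 0`,
so this is automatic for words of length at most 1). -/
def LastRise (l : List ℕ) : Prop :=
  l.length ≤ 1 ∨ l.getD (l.length - 2) 0 ≤ l.getD (l.length - 1) 0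

/-- The formal power series `∑_{w ∈ NDD_n} x_w t^{des w} (1+t)^{n-2 des w}`:
its coefficient on the monomial `d` is the sum of `t^{des w}(1+t)^{n-2 des w}` over
words `w` of length `n` with content `d` and no double descents. -/
def Wfull (n : ℕ) : MvPowerSeries ℕ (Polynomial ℤ) :=
  fun d : ℕ →₀ ℕ =>
    ∑ w ∈ ((Finsupp.toMultiset d).toList.permutations.toFinset).filter
        (fun l => l.length = n ∧ ListNDD l),
      (X : Polynomial ℤ) ^ listDes w * (1 + X) ^ (n - 2 * listDes w)

/-- The series `∑_{w ∈ NDD_m, w_{m-1} ≤ w_m} x_w t^{des w} (1+t)^{m-1-2 des w}`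
(for `m = 0` this is `1`). -/
def Wrise (m : ℕ) : MvPowerSeries ℕ (Polynomial ℤ) :=
  fun d : ℕ →₀ ℕ =>
    ∑ w ∈ ((Finsupp.toMultiset d).toList.permutations.toFinset).filter
        (fun l => l.length = m ∧ ListNDD l ∧ LastRise l),
      (X : Polynomial ℤ) ^ listDes w * (1 + X) ^ (m - 1 - 2 * listDes w)

/-- The complete homogeneous symmetric function `h_k`, as a power series:
every monomial of degree `k` has coefficient `1`. -/
def hSeries (k : ℕ) : MvPowerSeries ℕ (Polynomial ℤ) :=
  fun d : ℕ →₀ ℕ => if (Finsupp.toMultiset d).card = k then 1 else 0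



lemma getD_drop' (l : List ℕ) (m j : ℕ) : (l.drop m).getD j 0 = l.getD (m + j) 0 := by
  rcases lt_or_ge (m + j) l.length with h | h
  · rw [List.getD_eq_getElem _ _ (by simp; omega), List.getD_eq_getElem _ _ h]
    simp
  · rw [List.getD_eq_default _ _ (by simp; omega), List.getD_eq_default _ _ h]

lemma getD_take' (l : List ℕ) (m j : ℕ) (hj : j < m) :
    (l.take m).getD j 0 = l.getD j 0 := by
  rcases lt_or_ge j l.length with h | h
  · rw [List.getD_eq_getElem _ _ (by simp; omega), List.getD_eq_getElem _ _ h]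
    simp
  · rw [List.getD_eq_default _ _ (by simp; omega), List.getD_eq_default _ _ h]

lemma sorted_iff_getD (l : List ℕ) :
    l.Pairwise (· ≤ ·) ↔ ∀ i, i + 1 < l.length → l.getD i 0 ≤ l.getD (i + 1) 0 := by
  rw [← List.isChain_iff_pairwise, List.isChain_iff_getElem]
  constructor
  · intro h i hi
    rw [List.getD_eq_getElem _ _ (by omega), List.getD_eq_getElem _ _ (by omega)]
    simpa [List.get_eq_getElem] using h i (by omega)
  · intro h i hi
    have := h i (by omega)
    rw [List.getD_eq_getElem _ _ (by omega), List.getD_eq_getElem _ _ (by omega)] at this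
    simpa [List.get_eq_getElem] using this

lemma sorted_le_last {l : List ℕ} (hs : l.Pairwise (· ≤ ·)) {x : ℕ} (hx : x ∈ l) :
    x ≤ l.getD (l.length - 1) 0 := by
  obtain ⟨i, hi, rfl⟩ := List.mem_iff_getElem.mp hx
  rw [List.getD_eq_getElem _ _ (by omega)]
  rcases eq_or_lt_of_le (show i ≤ l.length - 1 by omega) with rfl | hlt
  · rfl
  · exact List.pairwise_iff_getElem.mp hs i (l.length - 1) hi (by omega) hlt

lemma listDes_append_singleton (u : List ℕ) (a : ℕ) (hu : u ≠ []) :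
    listDes (u ++ [a]) = listDes u + (if a < u.getD (u.length - 1) 0 then 1 else 0) := by
  have hn : 1 ≤ u.length := List.length_pos_iff.mpr hu
  unfold listDes
  have hlen : (u ++ [a]).length - 1 = u.length := by simp
  rw [hlen]
  have hrs : List.range u.length = List.range (u.length - 1) ++ [u.length - 1] := by
    conv_lhs => rw [show u.length = (u.length - 1) + 1 by omega]
    rw [List.range_succ]
  rw [hrs, List.filter_append, List.length_append]
  congr 1
  · have : ∀ i ∈ List.range (u.length - 1),
        (decide ((u ++ [a]).getD (i + 1) 0 < (u ++ [a]).getD i 0))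
          = (decide (u.getD (i + 1) 0 < u.getD i 0)) := by
      intro i hi
      rw [List.mem_range] at hi
      rw [List.getD_append _ _ _ _ (by omega), List.getD_append _ _ _ _ (by omega)]
    rw [List.filter_congr this]
  · rw [List.filter_singleton]
    rw [List.getD_append_right u [a] 0 (u.length - 1 + 1) (by omega),
      List.getD_append u [a] 0 (u.length - 1) (by omega),
      show u.length - 1 + 1 - u.length = 0 by omega]
    simp only [List.getD_cons_zero]
    generalize u.getD (u.length - 1) 0 = b
    by_cases h : a < b <;> simp [h]

lemma ListNDD.take {w : List ℕ} (h : ListNDD w) (m : ℕ) : ListNDD (w.take m) := by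
  intro i hi
  have hlen : (w.take m).length = min m w.length := by simp
  rw [hlen] at hi
  rw [getD_take' _ _ _ (by omega), getD_take' _ _ _ (by omega), getD_take' _ _ _ (by omega)]
  exact h i (by omega)

lemma listDes_take (w : List ℕ) (m : ℕ) (hm : m ≤ w.length) :
    listDes (w.take m) =
      ((List.range (m - 1)).filter fun i => w.getD (i + 1) 0 < w.getD i 0).length := by
  unfold listDes
  have hlen : (w.take m).length = m := by simp; omega
  rw [hlen]
  congr 1
  apply List.filter_congr
  intro i hi
  rw [List.mem_range] at hi
  rw [getD_take' _ _ _ (by omega), getD_take' _ _ _ (by omega)]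

lemma lastRise_append_singleton (u : List ℕ) (a : ℕ) :
    LastRise (u ++ [a]) ↔ (u = [] ∨ u.getD (u.length - 1) 0 ≤ a) := by
  rcases eq_or_ne u [] with rfl | hu
  · simp [LastRise]
  · have hn : 1 ≤ u.length := List.length_pos_iff.mpr hu
    unfold LastRise
    have h1 : (u ++ [a]).length = u.length + 1 := by simp
    rw [h1]
    have h2 : (u ++ [a]).getD (u.length + 1 - 2) 0 = u.getD (u.length - 1) 0 := by
      rw [show u.length + 1 - 2 = u.length - 1 by omega,
        List.getD_append _ _ _ _ (by omega)]
    have h3 : (u ++ [a]).getD (u.length + 1 - 1) 0 = a := by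
      rw [List.getD_append_right _ _ _ _ (by omega)]
      simp
    rw [h2, h3]
    constructor
    · rintro (h | h)
      · omega
      · right; exact h
    · rintro (h | h)
      · exact absurd h hu
      · right; exact h

lemma ndd_lastRise {u : List ℕ} {a : ℕ} (h : ListNDD (u ++ [a]))
    (hd : a < u.getD (u.length - 1) 0) : LastRise u := by
  rcases le_or_gt u.length 1 with h1 | h1
  · exact Or.inl h1
  · right
    have h2 := h (u.length - 2) (by simp; omega)
    rw [show u.length - 2 + 2 = u.length by omega,
      show u.length - 2 + 1 = u.length - 1 by omega,
      List.getD_append_right _ _ _ _ (by omega),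
      List.getD_append _ _ _ _ (by omega),
      List.getD_append _ _ _ _ (by omega),
      Nat.sub_self] at h2
    simp only [List.getD_cons_zero] at h2
    by_contra hc
    exact h2 ⟨hd, by omega⟩

lemma ndd_des_bound {w : List ℕ} (h : ListNDD w) :
    2 * listDes w ≤ w.length ∧ (w ≠ [] → LastRise w → 2 * listDes w + 1 ≤ w.length) := by
  induction w using List.reverseRecOn with
  | nil => simp [listDes]
  | append_singleton u a ih =>
    have hndd_u : ListNDD u := by
      have := h.take u.length
      rwa [List.take_left] at this
    rcases eq_or_ne u [] with rfl | hu
    · constructor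
      · simp [listDes]
      · intro _ _; simp [listDes]
    · have hn : 1 ≤ u.length := List.length_pos_iff.mpr hu
      have hlen : (u ++ [a]).length = u.length + 1 := by simp
      obtain ⟨ih1, ih2⟩ := ih hndd_u
      rw [listDes_append_singleton u a hu]
      by_cases hd : a < u.getD (u.length - 1) 0
      · have hlr := ndd_lastRise h hd
        have h2 := ih2 hu hlr
        rw [if_pos hd]
        constructor
        · rw [hlen]; omega
        · intro _ hlr2
          rcases (lastRise_append_singleton u a).mp hlr2 with h' | h'
          · exact absurd h' hu
          · omega
      · rw [if_neg hd]
        constructor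
        · rw [hlen]; omega
        · intro _ _; rw [hlen]; omega

/-- The weight attached to a word `w` of length `n` and a cut position `m`. -/
def cutWeight (n m : ℕ) (w : List ℕ) : Polynomial ℤ :=
  (X : Polynomial ℤ) ^ (n - m) *
    ((X : Polynomial ℤ) ^ listDes (w.take m) * (1 + X) ^ (m - 1 - 2 * listDes (w.take m)))

def CutOK (m : ℕ) (w : List ℕ) : Prop :=
  (w.drop m).Pairwise (· ≤ ·) ∧ LastRise (w.take m)

lemma sum_cutWeight {w : List ℕ} (hw : w ≠ []) (hndd : ListNDD w) :
    ∑ m ∈ Finset.range (w.length + 1),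
      (if CutOK m w then cutWeight w.length m w else 0)
    = (X : Polynomial ℤ) ^ listDes w * (1 + X) ^ (w.length - 2 * listDes w) := by
  induction w using List.reverseRecOn with
  | nil => exact absurd rfl hw
  | append_singleton u a ih =>
    rcases eq_or_ne u [] with rfl | hu
    · rw [show ([] ++ [a] : List ℕ) = [a] by simp]
      rw [show ([a] : List ℕ).length = 1 from rfl, Finset.sum_range_succ,
        Finset.sum_range_one]
      have c0 : CutOK 0 [a] := by
        constructor
        · simp
        · left; simp
      have c1 : CutOK 1 [a] := by
        constructor
        · simp
        · left; simp
      rw [if_pos c0, if_pos c1]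
      unfold cutWeight
      norm_num [listDes]
      ring
    · have hn : 1 ≤ u.length := List.length_pos_iff.mpr hu
      have hlen : (u ++ [a]).length = u.length + 1 := by simp
      have hndd_u : ListNDD u := by
        have := hndd.take u.length
        rwa [List.take_left] at this
      rw [hlen, Finset.sum_range_succ]
      by_cases hd : a < u.getD (u.length - 1) 0
      · -- last step is a strict descent
        have hlr_u : LastRise u := ndd_lastRise hndd hd
        have hdes : listDes (u ++ [a]) = listDes u + 1 := by
          rw [listDes_append_singleton u a hu, if_pos hd]
        -- the m = u.length + 1 term vanishes
        have hlast : ¬ CutOK (u.length + 1) (u ++ [a]) := by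
          rintro ⟨-, h2⟩
          rw [List.take_of_length_le (by omega), lastRise_append_singleton] at h2
          rcases h2 with h2 | h2
          · exact hu h2
          · omega
        rw [if_neg hlast, add_zero, Finset.sum_range_succ]
        -- the m = u.length term
        have hmid : CutOK u.length (u ++ [a]) := by
          constructor
          · rw [List.drop_left]
            simp
          · rw [List.take_left]
            exact hlr_u
        rw [if_pos hmid]
        -- the terms m < u.length vanish
        have hzero : ∀ m ∈ Finset.range u.length,
            (if CutOK m (u ++ [a]) then cutWeight (u.length + 1) m (u ++ [a]) else 0) = 0 := by
          intro m hm
          rw [Finset.mem_range] at hm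
          rw [if_neg]
          rintro ⟨h1, -⟩
          rw [sorted_iff_getD] at h1
          have hlen2 : ((u ++ [a]).drop m).length = u.length + 1 - m := by
            rw [List.length_drop, hlen]
          have := h1 (u.length - 1 - m) (by omega)
          rw [getD_drop', getD_drop',
            show m + (u.length - 1 - m) = u.length - 1 by omega,
            show m + (u.length - 1 - m + 1) = u.length by omega,
            List.getD_append _ _ _ _ (by omega),
            List.getD_append_right _ _ _ _ (by omega), Nat.sub_self] at this
          simp only [List.getD_cons_zero] at this
          omega
        rw [Finset.sum_congr rfl hzero, Finset.sum_const, smul_zero, zero_add]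
        -- compute the m = u.length weight
        unfold cutWeight
        rw [List.take_left, hdes]
        rw [show u.length + 1 - u.length = 1 by omega]
        rw [show u.length + 1 - 2 * (listDes u + 1) = u.length - 1 - 2 * listDes u by omega]
        ring
      · -- last step is a weak rise
        push_neg at hd
        have hdes : listDes (u ++ [a]) = listDes u := by
          rw [listDes_append_singleton u a hu, if_neg (by omega), add_zero]
        have hbound : 2 * listDes u ≤ u.length := (ndd_des_bound hndd_u).1
        -- the m = u.length + 1 term
        have hlast : CutOK (u.length + 1) (u ++ [a]) := by
          constructor
          · rw [List.drop_of_length_le (by omega)]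
            simp
          · rw [List.take_of_length_le (by omega), lastRise_append_singleton]
            right; exact hd
        rw [if_pos hlast]
        -- the terms m ≤ u.length
        have hstep : ∀ m ∈ Finset.range (u.length + 1),
            (if CutOK m (u ++ [a]) then cutWeight (u.length + 1) m (u ++ [a]) else 0)
            = X * (if CutOK m u then cutWeight u.length m u else 0) := by
          intro m hm
          rw [Finset.mem_range] at hm
          have hm' : m ≤ u.length := by omega
          have htake : (u ++ [a]).take m = u.take m :=
            List.take_append_of_le_length hm'
          have hdrop : (u ++ [a]).drop m = u.drop m ++ [a] :=
            List.drop_append_of_le_length hm'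
          have hcond : CutOK m (u ++ [a]) ↔ CutOK m u := by
            unfold CutOK
            rw [htake, hdrop]
            constructor
            · rintro ⟨h1, h2⟩
              refine ⟨?_, h2⟩
              rw [List.pairwise_append] at h1
              exact h1.1
            · rintro ⟨h1, h2⟩
              refine ⟨?_, h2⟩
              rw [List.pairwise_append]
              refine ⟨h1, List.pairwise_singleton _ a, ?_⟩
              intro x hx b hb
              rw [List.mem_singleton] at hb
              subst hb
              refine le_trans (sorted_le_last h1 hx) ?_
              have hne : u.drop m ≠ [] := List.ne_nil_of_mem hx
              have hml : m < u.length := by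
                by_contra hc
                rw [List.drop_of_length_le (by omega)] at hne
                exact hne rfl
              have hlen3 : (u.drop m).length = u.length - m := by simp
              rw [getD_drop', hlen3, show m + (u.length - m - 1) = u.length - 1 by omega]
              exact hd
          have hwt : cutWeight (u.length + 1) m (u ++ [a]) = X * cutWeight u.length m u := by
            unfold cutWeight
            rw [htake, show u.length + 1 - m = (u.length - m) + 1 by omega, pow_succ]
            ring
          by_cases hc : CutOK m u
          · rw [if_pos (hcond.mpr hc), if_pos hc, hwt]
          · rw [if_neg (fun h => hc (hcond.mp h)), if_neg hc, mul_zero]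
        rw [Finset.sum_congr rfl hstep, ← Finset.mul_sum, ih hu hndd_u]
        -- combine
        unfold cutWeight
        rw [List.take_of_length_le (by omega), hdes]
        rw [show u.length + 1 - (u.length + 1) = 0 by omega, pow_zero, one_mul]
        rw [show u.length + 1 - 1 - 2 * listDes u = u.length - 2 * listDes u by omega]
        rw [show u.length + 1 - 2 * listDes u = (u.length - 2 * listDes u) + 1 by omega]
        ring

lemma ndd_append_sorted {u v : List ℕ} (hndd : ListNDD u) (hlr : LastRise u)
    (hv : v.Pairwise (· ≤ ·)) : ListNDD (u ++ v) := by
  intro i hi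
  have hlen : (u ++ v).length = u.length + v.length := by simp
  rw [hlen] at hi
  rw [sorted_iff_getD] at hv
  rcases lt_or_ge (i + 2) u.length with h2 | h2
  · rw [List.getD_append _ _ _ _ (by omega), List.getD_append _ _ _ _ (by omega),
      List.getD_append _ _ _ _ (by omega : i < u.length)]
    exact hndd i (by omega)
  · rcases eq_or_lt_of_le h2 with heq | hlt
    · rintro ⟨-, hb⟩
      rw [List.getD_append _ _ _ _ (by omega), List.getD_append _ _ _ _ (by omega)] at hb
      rcases hlr with h | h
      · omega
      · rw [show u.length - 2 = i by omega, show u.length - 1 = i + 1 by omega] at h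
        omega
    · rintro ⟨ha, -⟩
      rw [List.getD_append_right _ _ _ _ (by omega),
        List.getD_append_right _ _ _ _ (by omega)] at ha
      have := hv (i + 1 - u.length) (by omega)
      rw [show i + 1 - u.length + 1 = i + 2 - u.length by omega] at this
      omega

lemma mem_perms {d : ℕ →₀ ℕ} {l : List ℕ} :
    l ∈ (Finsupp.toMultiset d).toList.permutations.toFinset ↔
      (↑l : Multiset ℕ) = Finsupp.toMultiset d := by
  rw [List.mem_toFinset, List.mem_permutations, ← Multiset.coe_eq_coe, Multiset.coe_toList]


lemma coeff_term (n m : ℕ) (hm : m ≤ n) (d : ℕ →₀ ℕ)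
    (hd : (Finsupp.toMultiset d).card = n) :
    ∑ p ∈ Finset.HasAntidiagonal.antidiagonal d,
      (if (Finsupp.toMultiset p.1).card = n - m then (X : Polynomial ℤ) ^ (n - m) else 0) *
        Wrise m p.2
    = ∑ w ∈ ((Finsupp.toMultiset d).toList.permutations.toFinset).filter
        (fun l => l.length = n ∧ ListNDD l ∧ CutOK m l), cutWeight n m w := by
  unfold Wrise
  simp_rw [Finset.mul_sum]
  rw [Finset.sum_sigma' (Finset.HasAntidiagonal.antidiagonal d)]
  refine Finset.sum_bij'
    (fun x _ => x.2 ++ Multiset.sort (Finsupp.toMultiset x.1.1) (· ≤ ·))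
    (fun w _ => ⟨(Multiset.toFinsupp (↑(w.drop m) : Multiset ℕ),
        Multiset.toFinsupp (↑(w.take m) : Multiset ℕ)), w.take m⟩) ?_ ?_ ?_ ?_ ?_
  · -- maps into the target
    rintro ⟨⟨p1, p2⟩, u⟩ hx
    dsimp only at *
    rw [Finset.mem_sigma, Finset.HasAntidiagonal.mem_antidiagonal] at hx
    obtain ⟨hpd, hu⟩ := hx
    rw [Finset.mem_filter, mem_perms] at hu
    obtain ⟨humem, hulen, hundd, hulr⟩ := hu
    have hcard : (Finsupp.toMultiset p1).card + (Finsupp.toMultiset p2).card = n := by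
      rw [← Multiset.card_add, ← Finsupp.toMultiset_add, hpd, hd]
    have hcard2 : (Finsupp.toMultiset p2).card = m := by
      rw [← humem, Multiset.coe_card, hulen]
    have hsortlen : (Multiset.sort (Finsupp.toMultiset p1) (· ≤ ·)).length = n - m := by
      rw [Multiset.length_sort]; omega
    rw [Finset.mem_filter, mem_perms]
    refine ⟨?_, ?_, ?_, ?_, ?_⟩
    · rw [← Multiset.coe_add, Multiset.sort_eq, humem, ← Finsupp.toMultiset_add,
        add_comm p2 p1, hpd]
    · simp only [List.length_append, hulen, hsortlen]; omega
    · exact ndd_append_sorted hundd hulr (Multiset.pairwise_sort _ _)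
    · rw [← hulen, List.drop_left]
      exact Multiset.pairwise_sort _ _
    · rw [← hulen, List.take_left]
      exact hulr
  · -- inverse maps into the source
    intro w hw
    rw [Finset.mem_filter, mem_perms] at hw
    obtain ⟨hwmem, hwlen, hwndd, hwsort, hwlr⟩ := hw
    rw [Finset.mem_sigma, Finset.HasAntidiagonal.mem_antidiagonal]
    constructor
    · rw [← Multiset.toFinsupp_add, add_comm, Multiset.coe_add, List.take_append_drop,
        hwmem, Finsupp.toMultiset_toFinsupp]
    · rw [Finset.mem_filter, mem_perms, Multiset.toFinsupp_toMultiset]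
      refine ⟨rfl, ?_, hwndd.take m, hwlr⟩
      rw [List.length_take, hwlen]
      omega
  · -- left inverse
    rintro ⟨⟨p1, p2⟩, u⟩ hx
    dsimp only at *
    rw [Finset.mem_sigma, Finset.HasAntidiagonal.mem_antidiagonal] at hx
    obtain ⟨hpd, hu⟩ := hx
    rw [Finset.mem_filter, mem_perms] at hu
    obtain ⟨humem, hulen, -, -⟩ := hu
    have h1 : List.take m (u ++ Multiset.sort (Finsupp.toMultiset p1) (· ≤ ·)) = u := by
      rw [← hulen, List.take_left]
    have h2 : List.drop m (u ++ Multiset.sort (Finsupp.toMultiset p1) (· ≤ ·))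
        = Multiset.sort (Finsupp.toMultiset p1) (· ≤ ·) := by
      rw [← hulen, List.drop_left]
    simp only [h1, h2, Multiset.sort_eq, humem, Finsupp.toMultiset_toFinsupp]
  · -- right inverse
    intro w hw
    rw [Finset.mem_filter, mem_perms] at hw
    obtain ⟨hwmem, hwlen, hwndd, hwsort, hwlr⟩ := hw
    have hsort : Multiset.sort (↑(w.drop m) : Multiset ℕ) (· ≤ ·) = w.drop m :=
      List.Perm.eq_of_pairwise'
        (Multiset.pairwise_sort _ _) hwsort (Multiset.coe_eq_coe.mp (Multiset.sort_eq _ _))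
    simp only [Multiset.toFinsupp_toMultiset, hsort, List.take_append_drop]
  · -- summands agree
    rintro ⟨⟨p1, p2⟩, u⟩ hx
    dsimp only at *
    rw [Finset.mem_sigma, Finset.HasAntidiagonal.mem_antidiagonal] at hx
    obtain ⟨hpd, hu⟩ := hx
    rw [Finset.mem_filter, mem_perms] at hu
    obtain ⟨humem, hulen, -, -⟩ := hu
    have hcard2 : (Finsupp.toMultiset p2).card = m := by
      rw [← humem, Multiset.coe_card, hulen]
    have hcard1 : (Finsupp.toMultiset p1).card = n - m := by
      have : (Finsupp.toMultiset p1).card + (Finsupp.toMultiset p2).card = n := by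
        rw [← Multiset.card_add, ← Finsupp.toMultiset_add, hpd, hd]
      omega
    rw [if_pos hcard1]
    unfold cutWeight
    rw [← hulen, List.take_left]

lemma Wrise_eq_zero {m : ℕ} {e : ℕ →₀ ℕ} (h : (Finsupp.toMultiset e).card ≠ m) :
    Wrise m e = 0 := by
  unfold Wrise
  rw [Finset.filter_false_of_mem, Finset.sum_empty]
  rintro l hl ⟨hlen, -⟩
  rw [mem_perms] at hl
  apply h
  rw [← hl, Multiset.coe_card, hlen]

theorem ndd_word_decomposition (n : ℕ) (hn : 1 ≤ n) :
    Wfull n = ∑ m ∈ Finset.range (n + 1),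
      hSeries (n - m) * (MvPowerSeries.C : Polynomial ℤ →+* MvPowerSeries ℕ (Polynomial ℤ)) ((X : Polynomial ℤ) ^ (n - m)) *
        Wrise m := by
  funext d
  have hsum : (∑ m ∈ Finset.range (n + 1),
      hSeries (n - m) * (MvPowerSeries.C : Polynomial ℤ →+* MvPowerSeries ℕ (Polynomial ℤ)) ((X : Polynomial ℤ) ^ (n - m)) *
        Wrise m) d
      = ∑ m ∈ Finset.range (n + 1),
        (hSeries (n - m) * (MvPowerSeries.C : Polynomial ℤ →+* MvPowerSeries ℕ (Polynomial ℤ)) ((X : Polynomial ℤ) ^ (n - m)) *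
          Wrise m) d := Finset.sum_apply _ _ _
  have hterm : ∀ m : ℕ,
      (hSeries (n - m) * (MvPowerSeries.C : Polynomial ℤ →+* MvPowerSeries ℕ (Polynomial ℤ)) ((X : Polynomial ℤ) ^ (n - m)) *
        Wrise m) d
      = ∑ p ∈ Finset.HasAntidiagonal.antidiagonal d,
          (if (Finsupp.toMultiset p.1).card = n - m then (X : Polynomial ℤ) ^ (n - m) else 0) *
            Wrise m p.2 := by
    intro m
    have h0 : (hSeries (n - m) * (MvPowerSeries.C : Polynomial ℤ →+* MvPowerSeries ℕ (Polynomial ℤ))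
          ((X : Polynomial ℤ) ^ (n - m)) * Wrise m) d
        = MvPowerSeries.coeff d (hSeries (n - m) * (MvPowerSeries.C : Polynomial ℤ →+* MvPowerSeries ℕ (Polynomial ℤ))
          ((X : Polynomial ℤ) ^ (n - m)) * Wrise m) := rfl
    rw [h0, MvPowerSeries.coeff_mul]
    apply Finset.sum_congr rfl
    intro p _
    rw [MvPowerSeries.coeff_mul_C]
    have h1 : MvPowerSeries.coeff p.1 (hSeries (n - m))
        = (if (Finsupp.toMultiset p.1).card = n - m then (1 : Polynomial ℤ) else 0) := rfl
    have h2 : MvPowerSeries.coeff p.2 (Wrise m) = Wrise m p.2 := rfl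
    rw [h1, h2]
    split_ifs <;> simp
  rw [hsum]
  by_cases hd : (Finsupp.toMultiset d).card = n
  · show (∑ w ∈ ((Finsupp.toMultiset d).toList.permutations.toFinset).filter
        (fun l => l.length = n ∧ ListNDD l),
      (X : Polynomial ℤ) ^ listDes w * (1 + X) ^ (n - 2 * listDes w)) = _
    have hfilter : ∀ w ∈ ((Finsupp.toMultiset d).toList.permutations.toFinset).filter
        (fun l => l.length = n ∧ ListNDD l),
        (X : Polynomial ℤ) ^ listDes w * (1 + X) ^ (n - 2 * listDes w)
        = ∑ m ∈ Finset.range (n + 1), (if CutOK m w then cutWeight n m w else 0) := by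
      intro w hw
      rw [Finset.mem_filter] at hw
      obtain ⟨-, hwlen, hwndd⟩ := hw
      have hne : w ≠ [] := by
        intro h
        rw [h] at hwlen
        simp at hwlen
        omega
      have h3 := sum_cutWeight hne hwndd
      rw [hwlen] at h3
      rw [← h3]
    rw [Finset.sum_congr rfl hfilter, Finset.sum_comm]
    apply Finset.sum_congr rfl
    intro m hm
    rw [Finset.mem_range] at hm
    rw [hterm m, coeff_term n m (by omega) d hd, ← Finset.sum_filter, Finset.filter_filter]
    apply Finset.sum_congr _ (fun _ _ => rfl)
    apply Finset.filter_congr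
    intro l _
    exact and_assoc
  · have hful : Wfull n d = 0 := by
      show (∑ w ∈ ((Finsupp.toMultiset d).toList.permutations.toFinset).filter
          (fun l => l.length = n ∧ ListNDD l),
        (X : Polynomial ℤ) ^ listDes w * (1 + X) ^ (n - 2 * listDes w)) = 0
      rw [Finset.filter_false_of_mem, Finset.sum_empty]
      rintro l hl ⟨hlen, -⟩
      rw [mem_perms] at hl
      apply hd
      rw [← hl, Multiset.coe_card, hlen]
    rw [hful]
    symm
    apply Finset.sum_eq_zero
    intro m hm
    rw [Finset.mem_range] at hm
    rw [hterm m]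
    apply Finset.sum_eq_zero
    intro p hp
    rw [Finset.HasAntidiagonal.mem_antidiagonal] at hp
    by_cases h1 : (Finsupp.toMultiset p.1).card = n - m
    · rw [Wrise_eq_zero (show (Finsupp.toMultiset p.2).card ≠ m by
        have hcc : (Finsupp.toMultiset p.1).card + (Finsupp.toMultiset p.2).card
            = (Finsupp.toMultiset d).card := by
          rw [← Multiset.card_add, ← Finsupp.toMultiset_add, hp]
        omega), mul_zero]
    · rw [if_neg h1, zero_mul]
end
end
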